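/- arXiv:1110.1791 — 4 statements merged into one kernel-verified Lean document; each statement's English description precedes it below -/
import Mathlib

section
/- Assume conditions (P) and (S). Then the set 𝒟^(1) has the following explicit form: (i) if γ₂(θ^(1,max)) > 0 and θ^(1,r)₁ ≤ θ^(2,max)₁, then 𝒟^(1) = {θ ∈ ℝ² : θ < θ̃^(1,r) componentwise}; (ii) if γ₂(θ^(1,max)) > 0 and θ^(1,r)₁ > θ^(2,max)₁, then 𝒟^(1) = Γ_max ∩ {θ ∈ ℝ² : θ₁ < θ̃^(1,r)₁}; (iii) if γ₂(θ^(1,max)) ≤ 0, then 𝒟^(1) = Γ_max. -/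
open Matrix Set

noncomputable section

abbrev V : Type := Fin 2 → ℝ

def gam (S : Matrix (Fin 2) (Fin 2) ℝ) (μ : V) (θ : V) : ℝ :=
  -(1/2) * (θ ⬝ᵥ S.mulVec θ) - μ ⬝ᵥ θ

def gam1 (R : Matrix (Fin 2) (Fin 2) ℝ) (θ : V) : ℝ := R 0 0 * θ 0 + R 1 0 * θ 1
def gam2 (R : Matrix (Fin 2) (Fin 2) ℝ) (θ : V) : ℝ := R 0 1 * θ 0 + R 1 1 * θ 1

def condP (R : Matrix (Fin 2) (Fin 2) ℝ) : Prop :=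
  0 < R 0 0 ∧ 0 < R 1 1 ∧ 0 < R 0 0 * R 1 1 - R 0 1 * R 1 0

def condS (μ : V) (R : Matrix (Fin 2) (Fin 2) ℝ) : Prop :=
  R 1 1 * μ 0 - R 0 1 * μ 1 < 0 ∧ R 0 0 * μ 1 - R 1 0 * μ 0 < 0

def pvec1 (R : Matrix (Fin 2) (Fin 2) ℝ) : V := ![R 1 1, -(R 0 1)]
def pvec2 (R : Matrix (Fin 2) (Fin 2) ℝ) : V := ![-(R 1 0), R 0 0]

def θray1 (S : Matrix (Fin 2) (Fin 2) ℝ) (μ : V) (R : Matrix (Fin 2) (Fin 2) ℝ) : V :=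
  (-2 * (μ ⬝ᵥ pvec1 R) / (pvec1 R ⬝ᵥ S.mulVec (pvec1 R))) • pvec1 R

def θray2 (S : Matrix (Fin 2) (Fin 2) ℝ) (μ : V) (R : Matrix (Fin 2) (Fin 2) ℝ) : V :=
  (-2 * (μ ⬝ᵥ pvec2 R) / (pvec2 R ⬝ᵥ S.mulVec (pvec2 R))) • pvec2 R

def Gam (S : Matrix (Fin 2) (Fin 2) ℝ) (μ : V) : Set V := {θ | 0 < gam S μ θ}

def ltc (θ θ' : V) : Prop := ∀ i, θ i < θ' i

def Gmax (S : Matrix (Fin 2) (Fin 2) ℝ) (μ : V) : Set V :=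
  {θ | ∃ θ' ∈ Gam S μ, ltc θ θ'}

def Dset (S : Matrix (Fin 2) (Fin 2) ℝ) (μ : V) (i : Fin 2) (c : ℝ) : Set V :=
  {θ | ∃ θ' ∈ Gam S μ, ltc θ θ' ∧ θ' i < c}

/-!
`γ` is a strictly concave quadratic: along a chord,
`γ(p + t(q - p)) = (1 - t) γ(p) + t γ(q) + t(1 - t)/2 ⟨q - p, Σ(q - p)⟩`.
So `Γ̄` is convex, every `p ∈ ∂Γ` supports it (`⟨Σp + μ, q - p⟩ < 0` for `q ∈ Γ̄ \ {p}`), and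
no point of `Γ` reaches the maximal coordinates `θ^(1,max)₁`, `θ^(2,max)₂`; this settles (iii).

In (i) and (ii), `θ^(1,r)` is the boundary point on `γ₂ = 0` with `θ₁ > 0`. Its supporting
inequalities against `0` and `θ^(1,max)`, which lies strictly on the side `γ₂ > 0`, show that
`θ^(1,r)` is the lower of the two points of `∂Γ` on the line `θ₁ = θ^(1,r)₁`, so `θ̃^(1,r)` is the
upper one. Sliding a point of `Γ` along the chord towards `θ^(2,max)` raises its second
coordinate and keeps it in `Γ̄`: in (i) it reaches the line `θ₁ = θ^(1,r)₁` below `θ̃^(1,r)`,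
in (ii) it can be brought to any first coordinate between `θ^(2,max)₁` and `θ^(1,r)₁`.
-/

open Filter Topology

lemma Matrix.PosDef.isSymm {n : Type*} {A : Matrix n n ℝ} (hA : A.PosDef) : A.IsSymm :=
  isHermitian_iff_isSymm.1 hA.isHermitian

section Ellipse

variable {S R : Matrix (Fin 2) (Fin 2) ℝ} {μ : V}

lemma gam_zero : gam S μ 0 = 0 := by
  simp [gam]

lemma gam_add (hS : S.IsSymm) (p v : V) :
    gam S μ (p + v) = gam S μ p - (S *ᵥ p + μ) ⬝ᵥ v - (v ⬝ᵥ S *ᵥ v) / 2 := by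
  have h10 : S 1 0 = S 0 1 := hS.apply 0 1
  simp only [gam, dotProduct, mulVec, Fin.sum_univ_two, Pi.add_apply, h10]
  ring

lemma gam_add_smul_sub (hS : S.IsSymm) (p q : V) (t : ℝ) :
    gam S μ (p + t • (q - p)) = (1 - t) * gam S μ p + t * gam S μ q
      + t * (1 - t) / 2 * ((q - p) ⬝ᵥ S *ᵥ (q - p)) := by
  have h10 : S 1 0 = S 0 1 := hS.apply 0 1
  simp only [gam, dotProduct, mulVec, Fin.sum_univ_two, Pi.add_apply, Pi.sub_apply,
    Pi.smul_apply, smul_eq_mul, h10]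
  ring

lemma gam_smul_eq_zero (p : V) :
    gam S μ ((-2 * (μ ⬝ᵥ p) / (p ⬝ᵥ S *ᵥ p)) • p) = 0 := by
  rcases eq_or_ne (p ⬝ᵥ S *ᵥ p) 0 with h | h
  · rw [h, div_zero, zero_smul, gam_zero]
  · simp only [gam, mulVec_smul, dotProduct_smul, smul_dotProduct, smul_eq_mul]
    field_simp
    ring

lemma gam_add_smul_sub_nonneg (hS : S.PosDef) {p q : V} {t : ℝ} (hp : 0 ≤ gam S μ p)
    (hq : 0 ≤ gam S μ q) (ht0 : 0 ≤ t) (ht1 : t ≤ 1) : 0 ≤ gam S μ (p + t • (q - p)) := by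
  rw [gam_add_smul_sub hS.isSymm]
  have hQ : 0 ≤ (q - p) ⬝ᵥ S *ᵥ (q - p) := by
    simpa only [star_trivial] using hS.posSemidef.dotProduct_mulVec_nonneg (q - p)
  have h1t : 0 ≤ 1 - t := by linarith
  have := mul_nonneg (mul_nonneg ht0 h1t) hQ
  nlinarith [mul_nonneg h1t hp, mul_nonneg ht0 hq]

lemma gam_add_smul_sub_pos (hS : S.PosDef) {p q : V} {t : ℝ} (hp : 0 ≤ gam S μ p)
    (hq : 0 ≤ gam S μ q) (hpq : p ≠ q) (ht0 : 0 < t) (ht1 : t < 1) :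
    0 < gam S μ (p + t • (q - p)) := by
  rw [gam_add_smul_sub hS.isSymm]
  have hQ : 0 < (q - p) ⬝ᵥ S *ᵥ (q - p) := by
    simpa only [star_trivial] using hS.dotProduct_mulVec_pos (sub_ne_zero.2 hpq.symm)
  have h1t : 0 < 1 - t := by linarith
  have := mul_pos (mul_pos ht0 h1t) hQ
  nlinarith [mul_nonneg h1t.le hp, mul_nonneg ht0.le hq]

lemma mulVec_add_dotProduct_sub_neg (hS : S.PosDef) {p q : V} (hp : gam S μ p = 0)
    (hq : 0 ≤ gam S μ q) (hpq : p ≠ q) : (S *ᵥ p + μ) ⬝ᵥ (q - p) < 0 := by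
  have h := gam_add hS.isSymm (μ := μ) p (q - p)
  rw [add_sub_cancel, hp] at h
  have hQ : 0 < (q - p) ⬝ᵥ S *ᵥ (q - p) := by
    simpa only [star_trivial] using hS.dotProduct_mulVec_pos (sub_ne_zero.2 hpq.symm)
  linarith

lemma exists_pos_mul_sq_div_two_add_mul_eq {a k G : ℝ} (ha : 0 < a) (hG : 0 < G) :
    ∃ s, 0 < s ∧ a * s ^ 2 / 2 + k * s = G := by
  have hD : 0 ≤ k ^ 2 + 2 * a * G := by positivity
  set r := √(k ^ 2 + 2 * a * G)
  have hsq : r ^ 2 = k ^ 2 + 2 * a * G := Real.sq_sqrt hD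
  have hk : k < r := by nlinarith [Real.sqrt_nonneg (k ^ 2 + 2 * a * G)]
  refine ⟨(r - k) / a, div_pos (by linarith) ha, ?_⟩
  field_simp
  linear_combination hsq

lemma lt_of_gam_pos (hS : S.PosDef) (i : Fin 2) {c : ℝ}
    (hmax : ∀ θ, gam S μ θ = 0 → θ i ≤ c) {θ : V} (hθ : 0 < gam S μ θ) : θ i < c := by
  obtain ⟨s, hs, hroot⟩ :=
    exists_pos_mul_sq_div_two_add_mul_eq (k := (S *ᵥ θ + μ) i) (hS.diag_pos (i := i)) hθ
  have hbd : gam S μ (θ + s • Pi.single i 1) = 0 := by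
    rw [gam_add hS.isSymm]
    simp only [dotProduct_smul, smul_dotProduct, mulVec_smul, mulVec_single_one,
      single_one_dotProduct, dotProduct_single_one, col_apply, smul_eq_mul]
    linarith
  have := hmax _ hbd
  simp only [Pi.add_apply, Pi.smul_apply, Pi.single_eq_same, smul_eq_mul, mul_one] at this
  linarith

/-- `(Σu + μ)₂ < 0` says that `u` lies on the lower arc of `∂Γ`. If it failed, the supporting
inequalities at `u` against `0` and `X` would put `X` clockwise of the ray `0u`. -/
lemma mulVec_add_snd_neg_of_cross_pos (hS : S.PosDef) {u X : V} (hu : gam S μ u = 0)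
    (hX : gam S μ X = 0) (hu0 : 0 < u 0) (huX : u 0 ≤ X 0)
    (hcross : 0 < u 0 * X 1 - u 1 * X 0) : (S *ᵥ u + μ) 1 < 0 := by
  have hne0 : u ≠ 0 := fun h => by simp [h] at hu0
  have hneX : u ≠ X := by
    rintro rfl
    linarith [mul_comm (u 0) (u 1)]
  have h0 := mulVec_add_dotProduct_sub_neg hS hu gam_zero.ge hne0
  have hX' := mulVec_add_dotProduct_sub_neg hS hu hX.ge hneX
  simp only [dotProduct, Fin.sum_univ_two, Pi.sub_apply, Pi.zero_apply] at h0 hX'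
  by_contra! h1
  nlinarith [mul_nonneg h1 hcross.le, mul_nonneg (sub_nonneg.2 huX) (by linarith : (0:ℝ) ≤
    (S *ᵥ u + μ) 0 * u 0 + (S *ᵥ u + μ) 1 * u 1)]

lemma snd_lt_snd_of_mulVec_add_snd_neg (hS : S.PosDef) {u w : V} (hu : gam S μ u = 0)
    (hw : gam S μ w = 0) (h0 : u 0 = w 0) (h1 : u 1 ≠ w 1) (hlow : (S *ᵥ u + μ) 1 < 0) :
    u 1 < w 1 := by
  have h := mulVec_add_dotProduct_sub_neg hS hu hw.ge fun h => h1 (congrFun h 1)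
  simp only [dotProduct, Fin.sum_univ_two, Pi.sub_apply, h0, sub_self, mul_zero,
    zero_add] at h
  nlinarith

lemma snd_le_of_gam_nonneg (hS : S.PosDef) {u w z : V} (hu : gam S μ u = 0)
    (hw : gam S μ w = 0) (huw0 : u 0 = w 0) (huw1 : u 1 < w 1) (hz : 0 ≤ gam S μ z)
    (hz0 : z 0 = w 0) : z 1 ≤ w 1 := by
  have hup := mulVec_add_dotProduct_sub_neg hS hw hu.ge fun h => huw1.ne' (congrFun h 1)
  by_contra! hzw
  have hdown := mulVec_add_dotProduct_sub_neg hS hw hz fun h => hzw.ne (congrFun h 1)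
  simp only [dotProduct, Fin.sum_univ_two, Pi.sub_apply, huw0, hz0, sub_self, mul_zero,
    zero_add] at hup hdown
  nlinarith

lemma gam_θray1 : gam S μ (θray1 S μ R) = 0 :=
  gam_smul_eq_zero _

lemma gam2_θray1 : gam2 R (θray1 S μ R) = 0 := by
  simp only [θray1, gam2, pvec1, Pi.smul_apply, smul_eq_mul, cons_val_zero, cons_val_one]
  ring

lemma exists_pos_θray1_eq_smul (hS : S.PosDef) (hR : 0 < R 1 1)
    (hμ : R 1 1 * μ 0 - R 0 1 * μ 1 < 0) : ∃ c : ℝ, 0 < c ∧ θray1 S μ R = c • pvec1 R := by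
  have hp : pvec1 R ≠ 0 := fun h => hR.ne' (by simpa [pvec1] using congrFun h 0)
  have hQ : 0 < pvec1 R ⬝ᵥ S *ᵥ pvec1 R := by
    simpa only [star_trivial] using hS.dotProduct_mulVec_pos hp
  have hμp : μ ⬝ᵥ pvec1 R < 0 := by
    simp only [pvec1, dotProduct, Fin.sum_univ_two, cons_val_zero, cons_val_one]
    linarith
  exact ⟨-2 * (μ ⬝ᵥ pvec1 R) / (pvec1 R ⬝ᵥ S *ᵥ pvec1 R), div_pos (by linarith) hQ, rfl⟩

lemma θray1_zero_pos (hS : S.PosDef) (hR : 0 < R 1 1)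
    (hμ : R 1 1 * μ 0 - R 0 1 * μ 1 < 0) : 0 < θray1 S μ R 0 := by
  obtain ⟨c, hc, hray⟩ := exists_pos_θray1_eq_smul hS hR hμ
  rw [hray]
  simpa [pvec1] using mul_pos hc hR

lemma θray1_cross_pos (hS : S.PosDef) (hR : 0 < R 1 1)
    (hμ : R 1 1 * μ 0 - R 0 1 * μ 1 < 0) {θ : V} (hθ : 0 < gam2 R θ) :
    0 < θray1 S μ R 0 * θ 1 - θray1 S μ R 1 * θ 0 := by
  obtain ⟨c, hc, hray⟩ := exists_pos_θray1_eq_smul hS hR hμ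
  have := mul_pos hc hθ
  simp only [hray, gam2, pvec1, Pi.smul_apply, smul_eq_mul, cons_val_zero, cons_val_one] at this ⊢
  linarith

lemma Dset_eq_Gmax_of_forall_lt {i : Fin 2} {c : ℝ} (h : ∀ θ ∈ Gam S μ, θ i < c) :
    Dset S μ i c = Gmax S μ := by
  ext θ
  constructor
  · rintro ⟨θ', hθ', hlt, -⟩
    exact ⟨θ', hθ', hlt⟩
  · rintro ⟨θ', hθ', hlt⟩
    exact ⟨θ', hθ', hlt, h θ' hθ'⟩

lemma Dset_zero_eq_Gmax_inter (hS : S.PosDef) {T : V} {c : ℝ} (hT : 0 ≤ gam S μ T)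
    (hTc : T 0 < c) (htop : ∀ θ ∈ Gam S μ, θ 1 < T 1) :
    Dset S μ 0 c = Gmax S μ ∩ {θ | θ 0 < c} := by
  ext θ
  constructor
  · rintro ⟨θ', hθ', hlt, hc⟩
    exact ⟨⟨θ', hθ', hlt⟩, (hlt 0).trans hc⟩
  rintro ⟨⟨θ', hθ', hlt⟩, hθc⟩
  by_cases hc : θ' 0 < c
  · exact ⟨θ', hθ', hlt, hc⟩
  replace hc := not_lt.1 hc
  obtain ⟨x, hx, hxc⟩ := exists_between (max_lt (show θ 0 < c from hθc) hTc)
  have hθx : θ 0 < x := (le_max_left _ _).trans_lt hx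
  have hTx : T 0 < x := (le_max_right _ _).trans_lt hx
  set t := (θ' 0 - x) / (θ' 0 - T 0)
  have hden : 0 < θ' 0 - T 0 := by linarith
  have ht0 : 0 < t := div_pos (by linarith) hden
  have ht1 : t < 1 := (div_lt_one hden).2 (by linarith)
  have hz0 : θ' 0 + t * (T 0 - θ' 0) = x := by
    simp only [t]
    field_simp
    ring
  have hne : θ' ≠ T := fun h => by rw [h] at hc; linarith
  refine ⟨θ' + t • (T - θ'), gam_add_smul_sub_pos hS (le_of_lt hθ') hT hne ht0 ht1, ?_, ?_⟩
  · intro i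
    fin_cases i
    · simpa [hz0] using hθx
    · have := mul_pos ht0 (sub_pos.2 (htop θ' hθ'))
      simp only [Fin.mk_one, Pi.add_apply, Pi.smul_apply, Pi.sub_apply, smul_eq_mul]
      linarith [hlt 1]
  · simpa [hz0] using hxc

lemma Dset_zero_eq_setOf_ltc (hS : S.PosDef) {u w T : V} {c : ℝ} (hu : gam S μ u = 0)
    (hw : gam S μ w = 0) (hu0 : u 0 = c) (hw0 : w 0 = c) (hc : 0 < c) (huw : u 1 < w 1)
    (hT : 0 ≤ gam S μ T) (hcT : c ≤ T 0) (htop : ∀ θ ∈ Gam S μ, θ 1 < T 1) :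
    Dset S μ 0 c = {θ | ltc θ w} := by
  ext θ
  constructor
  · rintro ⟨θ', hθ', hlt, hc'⟩
    set t := (c - θ' 0) / (T 0 - θ' 0)
    have hden : 0 < T 0 - θ' 0 := by linarith
    have ht0 : 0 < t := div_pos (by linarith) hden
    have ht1 : t ≤ 1 := (div_le_one hden).2 (by linarith)
    have hz0 : θ' 0 + t * (T 0 - θ' 0) = c := by
      simp only [t]
      field_simp
      ring
    have hz := snd_le_of_gam_nonneg hS hu hw (hu0.trans hw0.symm) huw
      (gam_add_smul_sub_nonneg hS (le_of_lt hθ') hT ht0.le ht1)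
      (by simpa [hw0] using hz0)
    have := mul_pos ht0 (sub_pos.2 (htop θ' hθ'))
    simp only [Pi.add_apply, Pi.smul_apply, Pi.sub_apply, smul_eq_mul] at hz
    intro i
    fin_cases i
    · simpa [hw0] using (hlt 0).trans hc'
    · simp only [Fin.mk_one]
      linarith [hlt 1]
  · intro hθw
    set p : V := (1 / 2 : ℝ) • u
    have hp : 0 < gam S μ p := by
      have hu' : (0 : V) ≠ u := fun h => by simp [← h] at hu0; linarith
      simpa [p] using gam_add_smul_sub_pos hS gam_zero.ge hu.ge hu' (t := 1 / 2)
        (by norm_num) (by norm_num)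
    have hpw : p ≠ w := fun h => by
      have := congrFun h 0
      simp only [p, Pi.smul_apply, smul_eq_mul, hu0, hw0] at this
      linarith
    have hcont : Continuous fun t : ℝ => p + t • (w - p) := by fun_prop
    have hlim : Tendsto (fun t : ℝ => p + t • (w - p)) (𝓝 1) (𝓝 w) := by
      simpa using hcont.tendsto 1
    have hev : ∀ᶠ t in 𝓝[<] (1 : ℝ), (ltc θ (p + t • (w - p)) ∧ 0 < t) ∧ t < 1 := by
      refine (Filter.Eventually.and ?_ (lt_mem_nhds one_pos)).filter_mono nhdsWithin_le_nhds
        |>.and self_mem_nhdsWithin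
      exact Filter.eventually_all.2 fun i => (tendsto_pi_nhds.1 hlim i).eventually
        (lt_mem_nhds (hθw i))
    obtain ⟨t, ⟨hlt, ht0⟩, ht1⟩ := hev.exists
    refine ⟨p + t • (w - p), gam_add_smul_sub_pos hS hp.le hw.ge hpw ht0 ht1, hlt, ?_⟩
    simp only [p, Pi.add_apply, Pi.smul_apply, Pi.sub_apply, smul_eq_mul, hu0, hw0]
    nlinarith

end Ellipse

theorem stmt_0_general
    (S R : Matrix (Fin 2) (Fin 2) ℝ) (μ : V)
    (hSpd : S.PosDef)
    (hP : condP R) (hS : condS μ R)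
    (θmax1 θmax2 tθ1r : V)
    -- θ^(1,max) is the point of ∂Γ maximizing the first coordinate
    (hmax1 : gam S μ θmax1 = 0 ∧ ∀ θ, gam S μ θ = 0 → θ 0 ≤ θmax1 0)
    -- θ^(2,max) is the point of ∂Γ maximizing the second coordinate
    (hmax2 : gam S μ θmax2 = 0 ∧ ∀ θ, gam S μ θ = 0 → θ 1 ≤ θmax2 1)
    -- θ̃^(1,r) is the symmetric point of θ^(1,r) on ∂Γ
    (htθ1r : (θray1 S μ R = θmax1 ∧ tθ1r = θmax1) ∨
      (θray1 S μ R ≠ θmax1 ∧ gam S μ tθ1r = 0 ∧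
        tθ1r 0 = θray1 S μ R 0 ∧ tθ1r 1 ≠ θray1 S μ R 1))
    (θΓ1 : V) (hθΓ1 : θΓ1 = if gam2 R θmax1 ≤ 0 then θmax1 else θray1 S μ R) :
    -- case (i)
    ((0 < gam2 R θmax1 → θray1 S μ R 0 ≤ θmax2 0 →
        Dset S μ 0 (θΓ1 0) = {θ | ltc θ tθ1r}) ∧
    -- case (ii)
     (0 < gam2 R θmax1 → θmax2 0 < θray1 S μ R 0 →
        Dset S μ 0 (θΓ1 0) = Gmax S μ ∩ {θ | θ 0 < tθ1r 0}) ∧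
    -- case (iii)
     (gam2 R θmax1 ≤ 0 → Dset S μ 0 (θΓ1 0) = Gmax S μ)) := by
  obtain ⟨hmax1, hle1⟩ := hmax1
  obtain ⟨hmax2, hle2⟩ := hmax2
  have htop : ∀ θ ∈ Gam S μ, θ 1 < θmax2 1 := fun θ hθ => lt_of_gam_pos hSpd 1 hle2 hθ
  have hray (h2 : 0 < gam2 R θmax1) : θΓ1 = θray1 S μ R ∧ gam S μ tθ1r = 0 ∧
      tθ1r 0 = θray1 S μ R 0 ∧ tθ1r 1 ≠ θray1 S μ R 1 := by
    have hne : θray1 S μ R ≠ θmax1 := fun h => by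
      rw [← h, gam2_θray1] at h2
      exact lt_irrefl _ h2
    rcases htθ1r with ⟨h, -⟩ | ⟨-, htθ1r⟩
    · exact absurd h hne
    · exact ⟨by rw [hθΓ1, if_neg h2.not_ge], htθ1r⟩
  refine ⟨fun h2 hcase => ?_, fun h2 hcase => ?_, fun h3 => ?_⟩
  · obtain ⟨hΓ, hbd, ht0, ht1⟩ := hray h2
    have hu0 := θray1_zero_pos hSpd hP.2.1 hS.1
    have hlow := mulVec_add_snd_neg_of_cross_pos hSpd gam_θray1 hmax1 hu0
      (hle1 _ gam_θray1) (θray1_cross_pos hSpd hP.2.1 hS.1 h2)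
    have huw := snd_lt_snd_of_mulVec_add_snd_neg hSpd gam_θray1 hbd ht0.symm ht1.symm hlow
    rw [hΓ]
    exact Dset_zero_eq_setOf_ltc hSpd gam_θray1 hbd rfl ht0 hu0 huw hmax2.ge hcase htop
  · obtain ⟨hΓ, -, ht0, -⟩ := hray h2
    rw [hΓ, ht0]
    exact Dset_zero_eq_Gmax_inter hSpd hmax2.ge hcase htop
  · rw [hθΓ1, if_pos h3]
    exact Dset_eq_Gmax_of_forall_lt fun θ hθ => lt_of_gam_pos hSpd 0 hle1 hθ

/-- explicit form of the domain `𝒟^(1)` (Lemma 3.1 of Dai–Miyazawa). -/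
theorem stmt_0
    (S R : Matrix (Fin 2) (Fin 2) ℝ) (μ : V)
    (hSpd : S.PosDef) (hSsym : S.IsSymm) (hμ : μ ≠ 0)
    (hP : condP R) (hS : condS μ R)
    (θmax1 θmax2 tθ1r : V)
    -- θ^(1,max) is the point of ∂Γ maximizing the first coordinate
    (hmax1 : gam S μ θmax1 = 0 ∧ ∀ θ, gam S μ θ = 0 → θ 0 ≤ θmax1 0)
    -- θ^(2,max) is the point of ∂Γ maximizing the second coordinate
    (hmax2 : gam S μ θmax2 = 0 ∧ ∀ θ, gam S μ θ = 0 → θ 1 ≤ θmax2 1)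
    -- θ̃^(1,r) is the symmetric point of θ^(1,r) on ∂Γ
    (htθ1r : (θray1 S μ R = θmax1 ∧ tθ1r = θmax1) ∨
      (θray1 S μ R ≠ θmax1 ∧ gam S μ tθ1r = 0 ∧
        tθ1r 0 = θray1 S μ R 0 ∧ tθ1r 1 ≠ θray1 S μ R 1))
    (θΓ1 : V) (hθΓ1 : θΓ1 = if gam2 R θmax1 ≤ 0 then θmax1 else θray1 S μ R) :
    -- case (i)
    ((0 < gam2 R θmax1 → θray1 S μ R 0 ≤ θmax2 0 →
        Dset S μ 0 (θΓ1 0) = {θ | ltc θ tθ1r}) ∧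
    -- case (ii)
     (0 < gam2 R θmax1 → θmax2 0 < θray1 S μ R 0 →
        Dset S μ 0 (θΓ1 0) = Gmax S μ ∩ {θ | θ 0 < tθ1r 0}) ∧
    -- case (iii)
     (gam2 R θmax1 ≤ 0 → Dset S μ 0 (θΓ1 0) = Gmax S μ)) :=
  stmt_0_general S R μ hSpd hP hS θmax1 θmax2 tθ1r hmax1 hmax2 htθ1r θΓ1 hθΓ1
end
end

section
/- Assume conditions (P) and (S). Then 𝒟^(1) ∩ 𝒟^(2) = {θ ∈ ℝ² : there exists θ' ∈ Γ with θ < θ' componentwise, θ'₁ < θ^(1,Γ)₁ and θ'₂ < θ^(2,Γ)₂}, and moreover: in Category I, 𝒟^(1) ∩ 𝒟^(2) = {θ ∈ Γ_max : θ₁ < θ^(1,Γ)₁ and θ₂ < θ^(2,Γ)₂}; in Category II, 𝒟^(1) ∩ 𝒟^(2) = {θ ∈ ℝ² : θ < θ̃^(2,r) componentwise}; in Category III, 𝒟^(1) ∩ 𝒟^(2) = {θ ∈ ℝ² : θ < θ̃^(1,r) componentwise}. -/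
/-!
`γ` is a strictly concave quadratic with `γ 0 = 0`, so every identity reduces to segment
arguments in the plane. Write `c = (θ^(1,Γ)₁, θ^(2,Γ)₂)`, which is positive.

For the general formula, take witnesses `a ∈ Γ` with `a₁ < c₁` and `b ∈ Γ` with `b₂ < c₂`. If
neither serves both bounds, `a` and `b` lie on opposite sides of the line `ℝ c`, and `[a, b]` meets
it at some `y ∈ Γ`; either `y < c`, or `y` lies beyond `c`, whence `c ∈ Γ` and `(1 - u) c` works
for small `u > 0`. In Category I a witness is pulled along a segment towards the boundary point
`θ^(2,Γ)` (resp. `θ^(1,Γ)`), which lies strictly below the relevant bound.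

In Category II, the P-matrix property of `R` rules out `θ^(2,Γ) = θ^(2,max)`, so
`θ^(2,Γ) = θ^(2,r)`. Since `{γ ≥ 0}` meets the side `γ₁ ≤ 0` of the line `γ₁ = 0` only below
`θ^(2,r)`, the point `θ^(2,r)` is the left end of the chord of `∂Γ` at its height, and
`θ̃^(2,r)` the right end. Points of `Γ` below that chord lie to its left because `θ^(1,max)` lies
above it, and `(1 - u) θ̃^(2,r) ∈ Γ` for `u ∈ (0, 1)` by strict concavity. Category III is
Category II with the two coordinates exchanged.
-/

open Matrix Set

noncomputable section

open Filter Topology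

theorem exists_pos_quadratic_root {a b c : ℝ} (ha : 0 < a) (hc : 0 < c) :
    ∃ s, 0 < s ∧ a * s ^ 2 + b * s = c := by
  have hD : 0 ≤ b ^ 2 + 4 * a * c := by positivity
  have hsq := Real.sq_sqrt hD
  have hlt : b < √(b ^ 2 + 4 * a * c) := by
    nlinarith [Real.sqrt_nonneg (b ^ 2 + 4 * a * c), mul_pos ha hc]
  refine ⟨(√(b ^ 2 + 4 * a * c) - b) / (2 * a), by positivity, ?_⟩
  field_simp
  linear_combination (norm := ring_nf) hsq

section Concave

variable {E : Type*} [AddCommGroup E] [Module ℝ E] {g : E → ℝ} {x y : E} {t : ℝ}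

theorem ConcaveOn.mul_le_combo (hg : ConcaveOn ℝ univ g) (hy : 0 ≤ g y) (ht : t ∈ Icc 0 1) :
    (1 - t) * g x ≤ g ((1 - t) • x + t • y) := by
  have := hg.2 (mem_univ x) (mem_univ y) (sub_nonneg.2 ht.2) ht.1 (by ring)
  simp only [smul_eq_mul] at this
  nlinarith [mul_nonneg ht.1 hy]

theorem ConcaveOn.pos_of_pos_of_nonneg (hg : ConcaveOn ℝ univ g) (hx : 0 < g x)
    (hy : 0 ≤ g y) (ht : t ∈ Ico 0 1) : 0 < g ((1 - t) • x + t • y) :=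
  (mul_pos (sub_pos.2 ht.2) hx).trans_le (hg.mul_le_combo hy ⟨ht.1, ht.2.le⟩)

theorem ConcaveOn.pos_smul (hg : ConcaveOn ℝ univ g) (h0 : 0 ≤ g 0) (hx : 0 < g x)
    (ht : t ∈ Ioc 0 1) : 0 < g (t • x) := by
  simpa using hg.pos_of_pos_of_nonneg hx h0 (t := 1 - t) ⟨by linarith [ht.2], by linarith [ht.1]⟩

theorem StrictConcaveOn.pos_of_nonneg_of_ne (hg : StrictConcaveOn ℝ univ g) (hx : 0 ≤ g x)
    (hy : 0 ≤ g y) (hxy : x ≠ y) (ht : t ∈ Ioo 0 1) : 0 < g ((1 - t) • x + t • y) := by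
  have := hg.2 (mem_univ x) (mem_univ y) hxy (sub_pos.2 ht.2) ht.1 (by ring)
  simp only [smul_eq_mul] at this
  nlinarith [mul_nonneg (sub_pos.2 ht.2).le hx, mul_nonneg ht.1.le hy]

theorem StrictConcaveOn.neg_of_eq_zero (hg : StrictConcaveOn ℝ univ g) (hx : g x = 0)
    (hy : g y = 0) (hxy : x ≠ y) {s : ℝ} (hs : 0 < s) : g (y + s • (y - x)) < 0 := by
  have hne : y + s • (y - x) ≠ x := by
    intro h
    apply hxy
    have : (1 + s) • (y - x) = 0 := by rw [← sub_eq_zero.2 h]; module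
    simpa [sub_eq_zero, eq_comm] using (smul_eq_zero.1 this).resolve_left (by positivity)
  have key := hg.2 (mem_univ _) (mem_univ x) hne (by positivity : (0:ℝ) < 1 / (1 + s))
    (by positivity : (0:ℝ) < s / (1 + s)) (by field_simp)
  have hcomb : (1 / (1 + s)) • (y + s • (y - x)) + (s / (1 + s)) • x = y := by
    match_scalars
    · field_simp
    · field_simp; ring
  rw [hcomb] at key
  simp only [smul_eq_mul, hx, hy] at key
  by_contra h
  have : 0 ≤ 1 / (1 + s) * g (y + s • (y - x)) := by have := not_lt.1 h; positivity
  linarith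

end Concave

namespace ConvergenceDomain

section Witness

variable {g : V → ℝ} {θ : V}

theorem ltc_combo {x y : V} (hx : ltc θ x) (hy : ltc θ y) {t : ℝ} (ht : t ∈ Icc 0 1) :
    ltc θ ((1 - t) • x + t • y) := fun i =>
  (convex_Ioi (θ i)) (hx i) (hy i) (sub_nonneg.2 ht.2) ht.1 (by ring)

theorem exists_ltc_one_sub_smul {z : V} (hz : ltc θ z) :
    ∃ u ∈ Ioo (0 : ℝ) 1, ltc θ ((1 - u) • z) := by
  have hnhds : ∀ i, ∀ᶠ u in 𝓝 (0 : ℝ), θ i < (1 - u) * z i := fun i =>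
    ((by fun_prop : Continuous fun u : ℝ => (1 - u) * z i).tendsto' 0 (z i)
      (by simp)).eventually (lt_mem_nhds (hz i))
  have hIoo : ∀ᶠ u in 𝓝[>] (0 : ℝ), u ∈ Ioo 0 1 := Ioo_mem_nhdsGT one_pos
  exact (hIoo.and (nhdsWithin_le_nhds (eventually_all.2 hnhds))).exists

theorem exists_witness_pulled_toward (hg : ConcaveOn ℝ univ g) {w B : V} {j : Fin 2} {c : ℝ}
    (hw : 0 < g w) (hθw : ltc θ w) (hB : 0 ≤ g B) (hBj : B j < c)
    (hθB : ∀ i, i ≠ j → θ i < B i) (hθj : θ j < c) : ∃ z, 0 < g z ∧ ltc θ z ∧ z j < c := by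
  by_cases hwj : w j < c
  · exact ⟨w, hw, hθw, hwj⟩
  push Not at hwj
  obtain ⟨x, hx, hxc⟩ := exists_between (max_lt hθj hBj)
  obtain ⟨hθx, hBx⟩ := max_lt_iff.1 hx
  have hden : 0 < w j - B j := by linarith
  set t := (w j - x) / (w j - B j)
  have ht : t ∈ Ico 0 1 := ⟨div_nonneg (by linarith) hden.le, (div_lt_one hden).2 (by linarith)⟩
  have hzj : ((1 - t) • w + t • B) j = x := by
    simp only [Pi.add_apply, Pi.smul_apply, smul_eq_mul, t]
    field_simp
    ring
  refine ⟨(1 - t) • w + t • B, hg.pos_of_pos_of_nonneg hw hB ht, fun i => ?_, hzj ▸ hxc⟩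
  by_cases hi : i = j
  · subst hi; rw [hzj]; exact hθx
  · exact (convex_Ioi (θ i)) (hθw i) (hθB i hi) (sub_nonneg.2 ht.2.le) ht.1 (by ring)

theorem exists_common_witness (hg : ConcaveOn ℝ univ g) (h0 : 0 ≤ g 0) {a b : V}
    {c0 c1 : ℝ} (hc0 : 0 < c0) (hc1 : 0 < c1)
    (ha : 0 < g a) (hθa : ltc θ a) (ha0 : a 0 < c0)
    (hb : 0 < g b) (hθb : ltc θ b) (hb1 : b 1 < c1) :
    ∃ z, 0 < g z ∧ ltc θ z ∧ z 0 < c0 ∧ z 1 < c1 := by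
  by_cases ha1 : a 1 < c1
  · exact ⟨a, ha, hθa, ha0, ha1⟩
  by_cases hb0 : b 0 < c0
  · exact ⟨b, hb, hθb, hb0, hb1⟩
  push Not at ha1 hb0
  -- `a` and `b` lie strictly on opposite sides of the line `ℝ (c0, c1)`; cut `[a, b]` with it.
  have hda : 0 < c0 * a 1 - c1 * a 0 := by nlinarith
  have hdb : c0 * b 1 - c1 * b 0 < 0 := by nlinarith
  set t := (c0 * a 1 - c1 * a 0) / ((c0 * a 1 - c1 * a 0) - (c0 * b 1 - c1 * b 0))
  have hden : 0 < (c0 * a 1 - c1 * a 0) - (c0 * b 1 - c1 * b 0) := by linarith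
  have ht : t ∈ Ico 0 1 := ⟨div_nonneg hda.le hden.le, (div_lt_one hden).2 (by linarith)⟩
  set y := (1 - t) • a + t • b
  have hy : 0 < g y := hg.pos_of_pos_of_nonneg ha hb.le ht
  have hθy : ltc θ y := ltc_combo hθa hθb ⟨ht.1, ht.2.le⟩
  have hcy : c0 * y 1 = c1 * y 0 := by
    simp only [y, t, Pi.add_apply, Pi.smul_apply, smul_eq_mul]
    field_simp
    ring
  by_cases hyc : y 0 < c0 ∧ y 1 < c1
  · exact ⟨y, hy, hθy, hyc⟩
  -- Otherwise `y = s • (c0, c1)` with `s ≥ 1`, so `0 < g (c0, c1)` and `(c0, c1)` can be shrunk.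
  have hy0 : c0 ≤ y 0 := by
    rcases not_and_or.1 hyc with h | h
    · exact not_lt.1 h
    · nlinarith [not_lt.1 h]
  have hy0' : 0 < y 0 := hc0.trans_le hy0
  set c : V := ![c0, c1]
  have hc : c = (c0 / y 0) • y := by
    ext i
    fin_cases i
    · simp [c]; field_simp
    · simp [c]; field_simp; linarith
  have hgc : 0 < g c :=
    hc ▸ hg.pos_smul h0 hy ⟨by positivity, (div_le_one (by linarith)).2 hy0⟩
  have hθc : ltc θ c := fun i => by
    fin_cases i
    · simpa [c] using (hθa 0).trans ha0
    · simpa [c] using (hθb 1).trans hb1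
  obtain ⟨u, hu, hθu⟩ := exists_ltc_one_sub_smul hθc
  refine ⟨(1 - u) • c, hg.pos_smul h0 hgc ⟨by linarith [hu.2], by linarith [hu.1]⟩, hθu, ?_, ?_⟩
  · simpa [c] using mul_lt_mul_of_pos_right (by linarith [hu.1] : 1 - u < 1) hc0
  · simpa [c] using mul_lt_mul_of_pos_right (by linarith [hu.1] : 1 - u < 1) hc1

end Witness

variable {S R : Matrix (Fin 2) (Fin 2) ℝ} {μ : V}

theorem gam_add_smul (hS : S.IsSymm) (x d : V) (s : ℝ) :
    gam S μ (x + s • d) =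
      gam S μ x - s * ((S *ᵥ x + μ) ⬝ᵥ d) - s ^ 2 / 2 * (d ⬝ᵥ S *ᵥ d) := by
  have hx : x ⬝ᵥ S *ᵥ d = (S *ᵥ x) ⬝ᵥ d := by
    rw [dotProduct_mulVec, ← mulVec_transpose, hS.eq]
  simp only [gam, mulVec_add, mulVec_smul, dotProduct_add, add_dotProduct, dotProduct_smul,
    smul_dotProduct, smul_eq_mul, hx, dotProduct_comm d (S *ᵥ x)]
  ring

theorem gam_combo (hS : S.IsSymm) (x y : V) (t : ℝ) :
    gam S μ ((1 - t) • x + t • y) =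
      (1 - t) * gam S μ x + t * gam S μ y + t * (1 - t) / 2 * ((y - x) ⬝ᵥ S *ᵥ (y - x)) := by
  have hy := gam_add_smul (μ := μ) hS x (y - x) 1
  have ht := gam_add_smul (μ := μ) hS x (y - x) t
  rw [one_smul, add_sub_cancel] at hy
  rw [show (1 - t) • x + t • y = x + t • (y - x) by module, ht, hy]
  ring

theorem strictConcaveOn_gam (hS : S.PosDef) : StrictConcaveOn ℝ univ (gam S μ) := by
  refine ⟨convex_univ, fun x _ y _ hxy a b ha hb hab => ?_⟩
  obtain rfl : a = 1 - b := by linarith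
  have hQ : 0 < (y - x) ⬝ᵥ S *ᵥ (y - x) := by
    simpa using hS.dotProduct_mulVec_pos (sub_ne_zero.2 hxy.symm)
  rw [smul_eq_mul, smul_eq_mul, gam_combo (isHermitian_iff_isSymm.1 hS.isHermitian)]
  nlinarith [mul_pos (mul_pos ha hb) hQ]

theorem concaveOn_gam (hS : S.PosDef) : ConcaveOn ℝ univ (gam S μ) :=
  (strictConcaveOn_gam hS).concaveOn

theorem gam_zero : gam S μ 0 = 0 := by simp [gam]

/-- `m = θ^(j+1,max)`; coordinates are indexed from `0`. -/
def IsBoundaryMax (S : Matrix (Fin 2) (Fin 2) ℝ) (μ : V) (j : Fin 2) (m : V) : Prop :=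
  gam S μ m = 0 ∧ ∀ θ, gam S μ θ = 0 → θ j ≤ m j

theorem IsBoundaryMax.lt_of_pos (hS : S.PosDef) {j : Fin 2} {m z : V}
    (hm : IsBoundaryMax S μ j m) (hz : 0 < gam S μ z) : z j < m j := by
  have hQ : 0 < Pi.single j 1 ⬝ᵥ S *ᵥ Pi.single j 1 := by
    simpa using hS.dotProduct_mulVec_pos (x := Pi.single j (1 : ℝ)) (by simp)
  obtain ⟨s, hs, hroot⟩ := exists_pos_quadratic_root (half_pos hQ) hz
    (b := (S *ᵥ z + μ) ⬝ᵥ Pi.single j 1)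
  have hbd := hm.2 (z + s • Pi.single j 1) (by
    rw [gam_add_smul (isHermitian_iff_isSymm.1 hS.isHermitian)]; linear_combination -hroot)
  simp only [Pi.add_apply, Pi.smul_apply, Pi.single_eq_same, smul_eq_mul, mul_one] at hbd
  linarith

theorem IsBoundaryMax.eq_of_apply_eq (hS : S.PosDef) {j : Fin 2} {m x : V}
    (hm : IsBoundaryMax S μ j m) (hx : gam S μ x = 0) (hxj : x j = m j) : x = m := by
  by_contra hne
  have hmid := (strictConcaveOn_gam hS).pos_of_nonneg_of_ne hx.ge hm.1.ge hne
    (t := 1 / 2) ⟨by norm_num, by norm_num⟩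
  have := hm.lt_of_pos hS hmid
  simp only [Pi.add_apply, Pi.smul_apply, smul_eq_mul, hxj] at this
  linarith

def rayCoef (S : Matrix (Fin 2) (Fin 2) ℝ) (μ p : V) : ℝ := -2 * (μ ⬝ᵥ p) / (p ⬝ᵥ S *ᵥ p)

theorem gam_smul {p : V} (hp : p ⬝ᵥ S *ᵥ p ≠ 0) (c : ℝ) :
    gam S μ (c • p) = c * (p ⬝ᵥ S *ᵥ p) / 2 * (rayCoef S μ p - c) := by
  simp only [gam, rayCoef, mulVec_smul, dotProduct_smul, smul_dotProduct, smul_eq_mul]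
  field_simp
  ring

theorem gam_rayCoef_smul (p : V) : gam S μ (rayCoef S μ p • p) = 0 := by
  by_cases hp : p ⬝ᵥ S *ᵥ p = 0
  · rw [rayCoef, hp, div_zero, zero_smul, gam_zero]
  · simp [gam_smul hp]

theorem rayCoef_pos (hS : S.PosDef) {p : V} (hμp : μ ⬝ᵥ p < 0) : 0 < rayCoef S μ p := by
  have hQ : 0 < p ⬝ᵥ S *ᵥ p := by
    simpa using hS.dotProduct_mulVec_pos (x := p) (by rintro rfl; simp at hμp)
  exact div_pos (by linarith) hQ

theorem le_rayCoef_of_gam_smul_nonneg (hS : S.PosDef) {p : V} (hμp : μ ⬝ᵥ p < 0) {s : ℝ}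
    (hs : 0 ≤ gam S μ (s • p)) :
    s ≤ rayCoef S μ p ∧ (0 < gam S μ (s • p) → s < rayCoef S μ p) := by
  have hQ : 0 < p ⬝ᵥ S *ᵥ p := by
    simpa using hS.dotProduct_mulVec_pos (x := p) (by rintro rfl; simp at hμp)
  have hκ := rayCoef_pos hS hμp
  rw [gam_smul hQ.ne'] at hs ⊢
  constructor
  · by_contra h
    have : s * (p ⬝ᵥ S *ᵥ p) / 2 * (rayCoef S μ p - s) < 0 :=
      mul_neg_of_pos_of_neg (by have := hκ.trans (not_le.1 h); positivity) (by linarith)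
    linarith
  · intro hpos
    by_contra h
    have : s * (p ⬝ᵥ S *ᵥ p) / 2 * (rayCoef S μ p - s) ≤ 0 :=
      mul_nonpos_of_nonneg_of_nonpos (by have := hκ.trans_le (not_lt.1 h); positivity)
        (by linarith)
    linarith

theorem apply_le_ray_of_dotProduct_nonpos (hS : S.PosDef) {p w m y : V} {j : Fin 2}
    (hpj : 0 < p j) (hker : ∀ z, w ⬝ᵥ z = 0 → z = (z j / p j) • p) (hμp : μ ⬝ᵥ p < 0)
    (hm : gam S μ m = 0) (hwm : 0 < w ⬝ᵥ m) (hmj : rayCoef S μ p * p j ≤ m j)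
    (hy : 0 ≤ gam S μ y) (hwy : w ⬝ᵥ y ≤ 0) :
    y j ≤ rayCoef S μ p * p j ∧ (0 < gam S μ y → y j < rayCoef S μ p * p j) := by
  -- Cut `[y, m]` with the line `ker w = ℝ p`, on which `{γ ≥ 0}` is `[0, rayCoef S μ p • p]`.
  set t := -(w ⬝ᵥ y) / (w ⬝ᵥ m - w ⬝ᵥ y)
  have hden : 0 < w ⬝ᵥ m - w ⬝ᵥ y := by linarith
  have ht : t ∈ Ico 0 1 := ⟨div_nonneg (by linarith) hden.le, (div_lt_one hden).2 (by linarith)⟩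
  set z := (1 - t) • y + t • m
  have hz : z = (z j / p j) • p := hker z (by
    simp only [z, t, dotProduct_add, dotProduct_smul, smul_eq_mul]; field_simp; ring)
  have hzj : z j = (1 - t) * y j + t * m j := by simp [z]
  have hgz : 0 ≤ gam S μ z :=
    (mul_nonneg (sub_nonneg.2 ht.2.le) hy).trans
      ((concaveOn_gam hS).mul_le_combo hm.ge ⟨ht.1, ht.2.le⟩)
  rw [hz] at hgz
  obtain ⟨hle, hlt⟩ := le_rayCoef_of_gam_smul_nonneg hS hμp hgz
  have h1t : 0 < 1 - t := sub_pos.2 ht.2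
  constructor
  · have : z j ≤ rayCoef S μ p * p j := by
      rw [← div_le_iff₀ hpj]; exact hle
    nlinarith [mul_le_mul_of_nonneg_left hmj ht.1]
  · intro hy'
    have : z j < rayCoef S μ p * p j := by
      rw [← div_lt_iff₀ hpj]
      exact hlt (by rw [← hz]; exact (concaveOn_gam hS).pos_of_pos_of_nonneg hy' hm.ge ht)
    nlinarith [mul_le_mul_of_nonneg_left hmj ht.1]

theorem gam1_eq_dotProduct (θ : V) : gam1 R θ = Rᵀ 0 ⬝ᵥ θ := by
  simp [gam1, dotProduct, Fin.sum_univ_two]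

theorem gam2_eq_dotProduct (θ : V) : gam2 R θ = Rᵀ 1 ⬝ᵥ θ := by
  simp [gam2, dotProduct, Fin.sum_univ_two]

theorem eq_smul_pvec1_of_gam2_eq_zero (h : R 1 1 ≠ 0) {z : V} (hz : gam2 R z = 0) :
    z = (z 0 / pvec1 R 0) • pvec1 R := by
  rw [gam2] at hz
  ext i
  fin_cases i
  · simp [pvec1, h]
  · simp [pvec1]
    field_simp
    linarith

theorem eq_smul_pvec2_of_gam1_eq_zero (h : R 0 0 ≠ 0) {z : V} (hz : gam1 R z = 0) :
    z = (z 1 / pvec2 R 1) • pvec2 R := by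
  rw [gam1] at hz
  ext i
  fin_cases i
  · simp [pvec2]
    field_simp
    linarith
  · simp [pvec2, h]

theorem dotProduct_pvec1_neg (hSc : condS μ R) : μ ⬝ᵥ pvec1 R < 0 := by
  simp [pvec1, dotProduct, Fin.sum_univ_two]
  linarith [hSc.1]

theorem dotProduct_pvec2_neg (hSc : condS μ R) : μ ⬝ᵥ pvec2 R < 0 := by
  simp [pvec2, dotProduct, Fin.sum_univ_two]
  linarith [hSc.2]

theorem θray1_eq : θray1 S μ R = rayCoef S μ (pvec1 R) • pvec1 R := rfl

theorem θray2_eq : θray2 S μ R = rayCoef S μ (pvec2 R) • pvec2 R := rfl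

theorem θray1_zero : θray1 S μ R 0 = rayCoef S μ (pvec1 R) * R 1 1 := rfl

theorem θray1_one : θray1 S μ R 1 = rayCoef S μ (pvec1 R) * -R 0 1 := rfl

theorem θray2_zero : θray2 S μ R 0 = rayCoef S μ (pvec2 R) * -R 1 0 := rfl

theorem θray2_one : θray2 S μ R 1 = rayCoef S μ (pvec2 R) * R 0 0 := rfl

theorem gam_θray1 : gam S μ (θray1 S μ R) = 0 := gam_rayCoef_smul _

theorem gam_θray2 : gam S μ (θray2 S μ R) = 0 := gam_rayCoef_smul _

theorem gam2_θray1 : gam2 R (θray1 S μ R) = 0 := by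
  rw [gam2, θray1_zero, θray1_one]; ring

theorem gam1_θray2 : gam1 R (θray2 S μ R) = 0 := by
  rw [gam1, θray2_zero, θray2_one]; ring

theorem θray1_zero_pos (hS : S.PosDef) (hP : condP R) (hSc : condS μ R) :
    0 < θray1 S μ R 0 := by
  rw [θray1_zero]; exact mul_pos (rayCoef_pos hS (dotProduct_pvec1_neg hSc)) hP.2.1

theorem θray2_one_pos (hS : S.PosDef) (hP : condP R) (hSc : condS μ R) :
    0 < θray2 S μ R 1 := by
  rw [θray2_one]; exact mul_pos (rayCoef_pos hS (dotProduct_pvec2_neg hSc)) hP.1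

theorem gam1_θray1_pos (hS : S.PosDef) (hP : condP R) (hSc : condS μ R) :
    0 < gam1 R (θray1 S μ R) := by
  have := mul_pos (rayCoef_pos hS (dotProduct_pvec1_neg hSc)) hP.2.2
  rw [gam1, θray1_zero, θray1_one]
  linarith

theorem IsBoundaryMax.θray1_le {m : V} (hm : IsBoundaryMax S μ 0 m) : θray1 S μ R 0 ≤ m 0 :=
  hm.2 _ gam_θray1

theorem IsBoundaryMax.θray2_le {m : V} (hm : IsBoundaryMax S μ 1 m) : θray2 S μ R 1 ≤ m 1 :=
  hm.2 _ gam_θray2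

theorem fst_le_θray1_of_gam2_nonpos (hS : S.PosDef) (hP : condP R) (hSc : condS μ R) {m y : V}
    (hm : IsBoundaryMax S μ 0 m) (hm2 : 0 < gam2 R m) (hy : 0 ≤ gam S μ y)
    (hy2 : gam2 R y ≤ 0) :
    y 0 ≤ θray1 S μ R 0 ∧ (0 < gam S μ y → y 0 < θray1 S μ R 0) := by
  exact apply_le_ray_of_dotProduct_nonpos hS (p := pvec1 R) (w := Rᵀ 1) (j := 0)
    (by simpa [pvec1] using hP.2.1)
    (fun z hz => eq_smul_pvec1_of_gam2_eq_zero hP.2.1.ne' (by rwa [gam2_eq_dotProduct]))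
    (dotProduct_pvec1_neg hSc) hm.1 (by rwa [← gam2_eq_dotProduct]) hm.θray1_le hy
    (by rwa [← gam2_eq_dotProduct])

theorem snd_le_θray2_of_gam1_nonpos (hS : S.PosDef) (hP : condP R) (hSc : condS μ R) {m y : V}
    (hm : IsBoundaryMax S μ 1 m) (hm1 : 0 < gam1 R m) (hy : 0 ≤ gam S μ y)
    (hy1 : gam1 R y ≤ 0) :
    y 1 ≤ θray2 S μ R 1 ∧ (0 < gam S μ y → y 1 < θray2 S μ R 1) := by
  exact apply_le_ray_of_dotProduct_nonpos hS (p := pvec2 R) (w := Rᵀ 0) (j := 1)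
    (by simpa [pvec2] using hP.1)
    (fun z hz => eq_smul_pvec2_of_gam1_eq_zero hP.1.ne' (by rwa [gam1_eq_dotProduct]))
    (dotProduct_pvec2_neg hSc) hm.1 (by rwa [← gam1_eq_dotProduct]) hm.θray2_le hy
    (by rwa [← gam1_eq_dotProduct])

/-- `θ^(1,Γ)`, for `m = θ^(1,max)`. -/
def θGam1 (S : Matrix (Fin 2) (Fin 2) ℝ) (μ : V) (R : Matrix (Fin 2) (Fin 2) ℝ) (m : V) : V :=
  if gam2 R m ≤ 0 then m else θray1 S μ R

/-- `θ^(2,Γ)`, for `m = θ^(2,max)`. -/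
def θGam2 (S : Matrix (Fin 2) (Fin 2) ℝ) (μ : V) (R : Matrix (Fin 2) (Fin 2) ℝ) (m : V) : V :=
  if gam1 R m ≤ 0 then m else θray2 S μ R

theorem gam_θGam1 {m : V} (hm : gam S μ m = 0) : gam S μ (θGam1 S μ R m) = 0 := by
  unfold θGam1; split_ifs
  exacts [hm, gam_θray1]

theorem gam_θGam2 {m : V} (hm : gam S μ m = 0) : gam S μ (θGam2 S μ R m) = 0 := by
  unfold θGam2; split_ifs
  exacts [hm, gam_θray2]

theorem θGam1_zero_pos (hS : S.PosDef) (hP : condP R) (hSc : condS μ R) {m : V}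
    (hm : IsBoundaryMax S μ 0 m) : 0 < θGam1 S μ R m 0 := by
  have := θray1_zero_pos hS hP hSc
  unfold θGam1; split_ifs
  exacts [this.trans_le hm.θray1_le, this]

theorem θGam2_one_pos (hS : S.PosDef) (hP : condP R) (hSc : condS μ R) {m : V}
    (hm : IsBoundaryMax S μ 1 m) : 0 < θGam2 S μ R m 1 := by
  have := θray2_one_pos hS hP hSc
  unfold θGam2; split_ifs
  exacts [this.trans_le hm.θray2_le, this]

theorem gam1_pos_or_gam2_pos (hP : condP R) {m : V} (h0 : 0 < m 0) (h1 : 0 < m 1) :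
    0 < gam1 R m ∨ 0 < gam2 R m := by
  obtain ⟨h00, h11, hdet⟩ := hP
  by_contra! h
  obtain ⟨hγ1, hγ2⟩ := h
  simp only [gam1, gam2] at hγ1 hγ2
  nlinarith [mul_le_mul (by linarith : R 0 0 * m 0 ≤ -(R 1 0 * m 1))
    (by linarith : R 1 1 * m 1 ≤ -(R 0 1 * m 0)) (by positivity) (by nlinarith),
    mul_pos h0 h1]

theorem snd_lt_of_gam2_pos (hr01 : R 0 1 ≤ 0) (hr11 : 0 < R 1 1) {a y : V}
    (ha : gam2 R a = 0) (hy : 0 < gam2 R y) (hay : a 0 ≤ y 0) : a 1 < y 1 := by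
  simp only [gam2] at ha hy
  nlinarith [mul_le_mul_of_nonpos_left hay hr01]

theorem gam1_pos_of_catII (hS : S.PosDef) (hP : condP R) (hSc : condS μ R) {m1 m2 : V}
    (hm1 : IsBoundaryMax S μ 0 m1) (hm2 : IsBoundaryMax S μ 1 m2)
    (hII : ∀ i, θGam2 S μ R m2 i ≤ θGam1 S μ R m1 i) : 0 < gam1 R m2 := by
  by_contra! hle
  have h1 := hII 1
  rw [θGam2, if_pos hle] at h1
  have hG1 : θGam1 S μ R m1 = m2 := hm2.eq_of_apply_eq hS (gam_θGam1 hm1.1)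
    (le_antisymm (hm2.2 _ (gam_θGam1 hm1.1)) h1)
  unfold θGam1 at hG1
  split_ifs at hG1 with h2
  · subst hG1
    rcases gam1_pos_or_gam2_pos hP ((θray1_zero_pos hS hP hSc).trans_le hm1.θray1_le)
      ((θray2_one_pos hS hP hSc).trans_le hm2.θray2_le) with h | h <;> linarith
  · linarith [hG1 ▸ gam1_θray1_pos hS hP hSc]

theorem θray2_zero_lt (hS : S.PosDef) (hP : condP R) (hSc : condS μ R) {m y : V}
    (hm : IsBoundaryMax S μ 1 m) (hpos : 0 < gam1 R m) (hy : gam S μ y = 0)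
    (hy1 : y 1 = θray2 S μ R 1) (hne : y 0 ≠ θray2 S μ R 0) : θray2 S μ R 0 < y 0 := by
  -- Otherwise the midpoint of `y` and `θ^(2,r)` is a point of `Γ` with `γ₁ < 0` at the height
  -- of `θ^(2,r)`.
  by_contra hle
  have hlt : y 0 < θray2 S μ R 0 := lt_of_le_of_ne (not_lt.1 hle) hne
  have hw := (strictConcaveOn_gam hS).pos_of_nonneg_of_ne hy.ge (gam_θray2 (R := R)).ge
    (fun h => hne (h ▸ rfl)) (t := 1 / 2) ⟨by norm_num, by norm_num⟩
  have hb := gam1_θray2 (S := S) (μ := μ) (R := R)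
  have := (snd_le_θray2_of_gam1_nonpos hS hP hSc hm hpos hw.le ?_).2 hw
  · simp only [Pi.add_apply, Pi.smul_apply, smul_eq_mul, hy1] at this
    linarith
  · simp only [gam1, Pi.add_apply, Pi.smul_apply, smul_eq_mul, hy1] at hb ⊢
    nlinarith [hP.1]

theorem fst_le_of_snd_lt (hS : S.PosDef) {m b T z : V} (hm : IsBoundaryMax S μ 0 m)
    (hb : gam S μ b = 0) (hT : gam S μ T = 0) (hTb : T 1 = b 1) (hbT : b 0 < T 0)
    (hbm : b 1 ≤ m 1) (hz : 0 < gam S μ z) (hz1 : z 1 < b 1) : z 0 ≤ T 0 := by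
  by_contra! hzT
  rcases (hm.2 T hT).eq_or_lt with hmT | hmT
  · linarith [hm.lt_of_pos hS hz]
  -- The point of `[z, m]` at height `b 1` is in `{γ ≥ 0}`, yet on the line `bT` beyond `T`.
  have hden : 0 < m 1 - z 1 := by linarith
  set t := (b 1 - z 1) / (m 1 - z 1)
  have ht : t ∈ Icc 0 1 := ⟨div_nonneg (by linarith) hden.le, (div_le_one hden).2 (by linarith)⟩
  set W := (1 - t) • z + t • m
  have hW : 0 ≤ gam S μ W :=
    (mul_nonneg (sub_nonneg.2 ht.2) hz.le).trans ((concaveOn_gam hS).mul_le_combo hm.1.ge ht)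
  have hW0 : T 0 < W 0 := (convex_Ioi (T 0)) hzT hmT (sub_nonneg.2 ht.2) ht.1 (by ring)
  have hW1 : W 1 = b 1 := by
    simp only [W, t, Pi.add_apply, Pi.smul_apply, smul_eq_mul]
    field_simp
    ring
  have hWT : W = T + ((W 0 - T 0) / (T 0 - b 0)) • (T - b) := by
    have : T 0 - b 0 ≠ 0 := by linarith
    ext i
    fin_cases i
    · simp; field_simp; ring
    · simp [hW1, hTb]
  have := (strictConcaveOn_gam hS).neg_of_eq_zero hb hT (fun h => by simp [h] at hbT)
    (div_pos (sub_pos.2 hW0) (sub_pos.2 hbT))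
  rw [← hWT] at this
  linarith

theorem Dset_inter_Dset_eq (hS : S.PosDef) {c0 c1 : ℝ} (hc0 : 0 < c0) (hc1 : 0 < c1) :
    Dset S μ 0 c0 ∩ Dset S μ 1 c1 =
      {θ | ∃ θ' ∈ Gam S μ, ltc θ θ' ∧ θ' 0 < c0 ∧ θ' 1 < c1} := by
  ext θ
  constructor
  · rintro ⟨⟨a, ha, hθa, ha0⟩, ⟨b, hb, hθb, hb1⟩⟩
    obtain ⟨z, hz, hθz, hz0, hz1⟩ :=
      exists_common_witness (concaveOn_gam hS) gam_zero.ge hc0 hc1 ha hθa ha0 hb hθb hb1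
    exact ⟨z, hz, hθz, hz0, hz1⟩
  · rintro ⟨z, hz, hθz, hz0, hz1⟩
    exact ⟨⟨z, hz, hθz, hz0⟩, ⟨z, hz, hθz, hz1⟩⟩

theorem Dset_inter_Dset_eq_sep_Gmax (hS : S.PosDef) {B1 B2 : V} (hB1 : gam S μ B1 = 0)
    (hB2 : gam S μ B2 = 0) (h0 : B2 0 < B1 0) (h1 : B1 1 < B2 1) :
    Dset S μ 0 (B1 0) ∩ Dset S μ 1 (B2 1) = {θ ∈ Gmax S μ | θ 0 < B1 0 ∧ θ 1 < B2 1} := by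
  ext θ
  constructor
  · rintro ⟨⟨a, ha, hθa, ha0⟩, ⟨b, _, hθb, hb1⟩⟩
    exact ⟨⟨a, ha, hθa⟩, (hθa 0).trans ha0, (hθb 1).trans hb1⟩
  · rintro ⟨⟨w, hw, hθw⟩, hθ0, hθ1⟩
    obtain ⟨a, ha, hθa, ha0⟩ := exists_witness_pulled_toward (concaveOn_gam hS) hw hθw hB2.ge h0
      (fun i hi => by fin_cases i; exacts [absurd rfl hi, hθ1]) hθ0
    obtain ⟨b, hb, hθb, hb1⟩ := exists_witness_pulled_toward (concaveOn_gam hS) hw hθw hB1.ge h1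
      (fun i hi => by fin_cases i; exacts [hθ0, absurd rfl hi]) hθ1
    exact ⟨⟨a, ha, hθa, ha0⟩, ⟨b, hb, hθb, hb1⟩⟩

theorem fst_le_θGam1_and_θray2_le_of_catII (hS : S.PosDef) (hP : condP R) (hSc : condS μ R)
    {m1 T : V} (hm1 : IsBoundaryMax S μ 0 m1) (hT : gam S μ T = 0) (hT1 : T 1 = θray2 S μ R 1)
    (hII1 : θray2 S μ R 1 ≤ θGam1 S μ R m1 1) :
    T 0 ≤ θGam1 S μ R m1 0 ∧ θray2 S μ R 1 ≤ m1 1 := by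
  unfold θGam1 at hII1 ⊢
  split_ifs at hII1 ⊢ with h2
  · exact ⟨hm1.2 T hT, hII1⟩
  push Not at h2
  have hr01 : R 0 1 < 0 := by
    have := (θray2_one_pos hS hP hSc).trans_le hII1
    rw [θray1_one] at this
    nlinarith [rayCoef_pos hS (dotProduct_pvec1_neg hSc)]
  have hup : ∀ {y : V}, 0 < gam2 R y → θray1 S μ R 0 ≤ y 0 → θray1 S μ R 1 < y 1 :=
    snd_lt_of_gam2_pos hr01.le hP.2.1 gam2_θray1
  refine ⟨?_, hII1.trans (hup h2 hm1.θray1_le).le⟩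
  by_cases hT2 : gam2 R T ≤ 0
  · exact (fst_le_θray1_of_gam2_nonpos hS hP hSc hm1 h2 hT.ge hT2).1
  · by_contra! hlt
    linarith [hup (not_le.1 hT2) hlt.le]

theorem Dset_inter_Dset_eq_of_catII (hS : S.PosDef) (hP : condP R) (hSc : condS μ R)
    {m1 m2 T : V} (hm1 : IsBoundaryMax S μ 0 m1) (hm2 : IsBoundaryMax S μ 1 m2)
    (hT : (θray2 S μ R = m2 ∧ T = m2) ∨
      (θray2 S μ R ≠ m2 ∧ gam S μ T = 0 ∧ T 1 = θray2 S μ R 1 ∧ T 0 ≠ θray2 S μ R 0))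
    (hII : ∀ i, θGam2 S μ R m2 i ≤ θGam1 S μ R m1 i) :
    Dset S μ 0 (θGam1 S μ R m1 0) ∩ Dset S μ 1 (θGam2 S μ R m2 1) = {θ | ltc θ T} := by
  have hpos := gam1_pos_of_catII hS hP hSc hm1 hm2 hII
  have hG2 : θGam2 S μ R m2 = θray2 S μ R := if_neg (not_le.2 hpos)
  obtain ⟨hT0, hT1, hTb⟩ : gam S μ T = 0 ∧ T 1 = θray2 S μ R 1 ∧ T 0 ≠ θray2 S μ R 0 := by
    rcases hT with ⟨hbm, -⟩ | ⟨-, h⟩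
    · linarith [hbm ▸ gam1_θray2 (S := S) (μ := μ) (R := R)]
    · exact h
  have hbT := θray2_zero_lt hS hP hSc hm2 hpos hT0 hT1 hTb
  obtain ⟨hTc, hbm⟩ := fst_le_θGam1_and_θray2_le_of_catII hS hP hSc hm1 hT0 hT1 (hG2 ▸ hII 1)
  have hb1 := θray2_one_pos hS hP hSc
  rw [hG2]
  ext θ
  constructor
  · rintro ⟨-, ⟨z, hz, hθz, hz1⟩⟩ i
    have := fst_le_of_snd_lt hS hm1 gam_θray2 hT0 hT1 hbT hbm hz hz1
    fin_cases i
    · exact (hθz 0).trans_le this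
    · exact hT1 ▸ (hθz 1).trans hz1
  · intro hθT
    obtain ⟨u, hu, hθu⟩ := exists_ltc_one_sub_smul hθT
    have hz := (strictConcaveOn_gam hS).pos_of_nonneg_of_ne hT0.ge gam_zero.ge
      (fun h => by simp [h] at hT1; linarith) hu
    rw [smul_zero, add_zero] at hz
    have hc0 := θGam1_zero_pos hS hP hSc hm1
    have hz0 : ((1 - u) • T) 0 < θGam1 S μ R m1 0 := by
      simp only [Pi.smul_apply, smul_eq_mul]
      rcases le_or_gt (T 0) 0 with h | h
      · nlinarith [hu.2]
      · nlinarith [hu.1]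
    have hz1 : ((1 - u) • T) 1 < θray2 S μ R 1 := by
      simp only [Pi.smul_apply, smul_eq_mul, hT1]
      nlinarith [hu.1]
    exact ⟨⟨_, hz, hθu, hz0⟩, ⟨_, hz, hθu, hz1⟩⟩

def swapV (θ : V) : V := ![θ 1, θ 0]

def swapM (A : Matrix (Fin 2) (Fin 2) ℝ) : Matrix (Fin 2) (Fin 2) ℝ :=
  A.submatrix (Equiv.swap 0 1) (Equiv.swap 0 1)

@[simp] theorem swapV_zero (θ : V) : swapV θ 0 = θ 1 := rfl

@[simp] theorem swapV_one (θ : V) : swapV θ 1 = θ 0 := rfl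

@[simp] theorem swapM_apply (A : Matrix (Fin 2) (Fin 2) ℝ) (i j : Fin 2) :
    swapM A i j = A (Equiv.swap 0 1 i) (Equiv.swap 0 1 j) := rfl

theorem swapV_swapV (θ : V) : swapV (swapV θ) = θ := by
  ext i; fin_cases i <;> rfl

theorem swapV_injective : Function.Injective swapV :=
  Function.LeftInverse.injective swapV_swapV

theorem swapV_smul (c : ℝ) (θ : V) : swapV (c • θ) = c • swapV θ := by
  ext i; fin_cases i <;> rfl

theorem ltc_swapV {x y : V} : ltc (swapV x) (swapV y) ↔ ltc x y := by
  constructor <;> intro h i <;> fin_cases i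
  exacts [h 1, h 0, h 1, h 0]

theorem dotProduct_swapV (x y : V) : swapV x ⬝ᵥ swapV y = x ⬝ᵥ y := by
  simp [dotProduct, Fin.sum_univ_two, add_comm]

theorem swapM_mulVec_swapV (A : Matrix (Fin 2) (Fin 2) ℝ) (x : V) :
    swapM A *ᵥ swapV x = swapV (A *ᵥ x) := by
  ext i; fin_cases i <;> simp [mulVec, dotProduct, Fin.sum_univ_two, add_comm]

theorem gam_swap (θ : V) : gam (swapM S) (swapV μ) (swapV θ) = gam S μ θ := by
  simp only [gam, swapM_mulVec_swapV, dotProduct_swapV]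

theorem rayCoef_swap (p : V) : rayCoef (swapM S) (swapV μ) (swapV p) = rayCoef S μ p := by
  simp only [rayCoef, swapM_mulVec_swapV, dotProduct_swapV]

theorem gam1_swap (θ : V) : gam1 (swapM R) (swapV θ) = gam2 R θ := by
  simp [gam1, gam2, add_comm]

theorem gam2_swap (θ : V) : gam2 (swapM R) (swapV θ) = gam1 R θ := by
  simp [gam1, gam2, add_comm]

theorem posDef_swapM (hS : S.PosDef) : (swapM S).PosDef :=
  hS.submatrix (Equiv.swap 0 1).injective

theorem condP_swap (hP : condP R) : condP (swapM R) := by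
  obtain ⟨h00, h11, hdet⟩ := hP
  refine ⟨by simpa using h11, by simpa using h00, ?_⟩
  simp only [swapM_apply, Equiv.swap_apply_left, Equiv.swap_apply_right]
  linarith

theorem condS_swap (hSc : condS μ R) : condS (swapV μ) (swapM R) := by
  obtain ⟨h1, h2⟩ := hSc
  exact ⟨by simpa using h2, by simpa using h1⟩

theorem θray1_swap : θray1 (swapM S) (swapV μ) (swapM R) = swapV (θray2 S μ R) := by
  have : pvec1 (swapM R) = swapV (pvec2 R) := by ext i; fin_cases i <;> simp [pvec1, pvec2]
  rw [θray1_eq, θray2_eq, this, rayCoef_swap, swapV_smul]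

theorem θray2_swap : θray2 (swapM S) (swapV μ) (swapM R) = swapV (θray1 S μ R) := by
  have : pvec2 (swapM R) = swapV (pvec1 R) := by ext i; fin_cases i <;> simp [pvec1, pvec2]
  rw [θray1_eq, θray2_eq, this, rayCoef_swap, swapV_smul]

theorem IsBoundaryMax.swap {j k : Fin 2} (hjk : j ≠ k) {m : V} (hm : IsBoundaryMax S μ j m) :
    IsBoundaryMax (swapM S) (swapV μ) k (swapV m) := by
  refine ⟨by rw [gam_swap]; exact hm.1, fun θ hθ => ?_⟩
  have := hm.2 (swapV θ) (by rwa [← gam_swap, swapV_swapV])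
  fin_cases j <;> fin_cases k <;> simp_all

theorem θGam1_swap (m : V) :
    θGam1 (swapM S) (swapV μ) (swapM R) (swapV m) = swapV (θGam2 S μ R m) := by
  simp only [θGam1, θGam2, gam2_swap, θray1_swap, apply_ite swapV]

theorem θGam2_swap (m : V) :
    θGam2 (swapM S) (swapV μ) (swapM R) (swapV m) = swapV (θGam1 S μ R m) := by
  simp only [θGam1, θGam2, gam1_swap, θray2_swap, apply_ite swapV]

theorem Dset_swap {j k : Fin 2} (hjk : j ≠ k) (c : ℝ) :
    Dset (swapM S) (swapV μ) k c = swapV ⁻¹' Dset S μ j c := by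
  have hk : ∀ θ : V, swapV θ k = θ j ∧ swapV θ j = θ k := by
    intro θ; fin_cases j <;> fin_cases k <;> simp_all
  ext θ
  constructor
  · rintro ⟨z, hz, hθz, hzk⟩
    refine ⟨swapV z, ?_, ltc_swapV.2 hθz, by rwa [(hk z).2]⟩
    show 0 < gam S μ (swapV z)
    rwa [← gam_swap, swapV_swapV]
  · rintro ⟨z, hz, hθz, hzj⟩
    refine ⟨swapV z, ?_, ?_, by rwa [(hk z).1]⟩
    · show 0 < gam _ _ (swapV z)
      rwa [gam_swap]
    · rwa [← ltc_swapV, swapV_swapV]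

theorem Dset_inter_Dset_eq_of_catIII (hS : S.PosDef) (hP : condP R) (hSc : condS μ R)
    {m1 m2 T : V} (hm1 : IsBoundaryMax S μ 0 m1) (hm2 : IsBoundaryMax S μ 1 m2)
    (hT : (θray1 S μ R = m1 ∧ T = m1) ∨
      (θray1 S μ R ≠ m1 ∧ gam S μ T = 0 ∧ T 0 = θray1 S μ R 0 ∧ T 1 ≠ θray1 S μ R 1))
    (hIII : ∀ i, θGam1 S μ R m1 i ≤ θGam2 S μ R m2 i) :
    Dset S μ 0 (θGam1 S μ R m1 0) ∩ Dset S μ 1 (θGam2 S μ R m2 1) = {θ | ltc θ T} := by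
  have hT' : (θray2 (swapM S) (swapV μ) (swapM R) = swapV m1 ∧ swapV T = swapV m1) ∨
      (θray2 (swapM S) (swapV μ) (swapM R) ≠ swapV m1 ∧ gam (swapM S) (swapV μ) (swapV T) = 0 ∧
        swapV T 1 = θray2 (swapM S) (swapV μ) (swapM R) 1 ∧
        swapV T 0 ≠ θray2 (swapM S) (swapV μ) (swapM R) 0) := by
    rw [θray2_swap]
    rcases hT with ⟨h1, h2⟩ | ⟨h1, h2, h3, h4⟩
    · exact Or.inl ⟨h1 ▸ rfl, h2 ▸ rfl⟩
    · exact Or.inr ⟨swapV_injective.ne h1, by rwa [gam_swap], h3, h4⟩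
  have key := Dset_inter_Dset_eq_of_catII (posDef_swapM hS) (condP_swap hP) (condS_swap hSc)
    (hm2.swap (k := 0) (by decide)) (hm1.swap (k := 1) (by decide)) hT' (fun i => by
      rw [θGam2_swap, θGam1_swap]; fin_cases i; exacts [hIII 1, hIII 0])
  rw [θGam1_swap, θGam2_swap, swapV_zero, swapV_one, Dset_swap (j := 1) (by decide),
    Dset_swap (j := 0) (by decide), ← preimage_inter, inter_comm] at key
  refine preimage_injective.2 (Function.LeftInverse.surjective swapV_swapV) (key.trans ?_)
  ext θ
  show ltc θ (swapV T) ↔ ltc (swapV θ) T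
  rw [← ltc_swapV, swapV_swapV]

end ConvergenceDomain

open ConvergenceDomain in
theorem stmt_2_general
    (S R : Matrix (Fin 2) (Fin 2) ℝ) (μ : V)
    (hSpd : S.PosDef)
    (hP : condP R) (hS : condS μ R)
    (θmax1 θmax2 tθ1r tθ2r : V)
    (hmax1 : gam S μ θmax1 = 0 ∧ ∀ θ, gam S μ θ = 0 → θ 0 ≤ θmax1 0)
    (hmax2 : gam S μ θmax2 = 0 ∧ ∀ θ, gam S μ θ = 0 → θ 1 ≤ θmax2 1)
    (htθ1r : (θray1 S μ R = θmax1 ∧ tθ1r = θmax1) ∨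
      (θray1 S μ R ≠ θmax1 ∧ gam S μ tθ1r = 0 ∧
        tθ1r 0 = θray1 S μ R 0 ∧ tθ1r 1 ≠ θray1 S μ R 1))
    (htθ2r : (θray2 S μ R = θmax2 ∧ tθ2r = θmax2) ∨
      (θray2 S μ R ≠ θmax2 ∧ gam S μ tθ2r = 0 ∧
        tθ2r 1 = θray2 S μ R 1 ∧ tθ2r 0 ≠ θray2 S μ R 0))
    (θΓ1 θΓ2 : V)
    (hθΓ1 : θΓ1 = if gam2 R θmax1 ≤ 0 then θmax1 else θray1 S μ R)
    (hθΓ2 : θΓ2 = if gam1 R θmax2 ≤ 0 then θmax2 else θray2 S μ R) :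
    -- general intersection formula
    (Dset S μ 0 (θΓ1 0) ∩ Dset S μ 1 (θΓ2 1) =
        {θ | ∃ θ' ∈ Gam S μ, ltc θ θ' ∧ θ' 0 < θΓ1 0 ∧ θ' 1 < θΓ2 1}) ∧
    -- Category I
    (θΓ2 0 < θΓ1 0 → θΓ1 1 < θΓ2 1 →
        Dset S μ 0 (θΓ1 0) ∩ Dset S μ 1 (θΓ2 1) =
          {θ ∈ Gmax S μ | θ 0 < θΓ1 0 ∧ θ 1 < θΓ2 1}) ∧
    -- Category II
    ((∀ i, θΓ2 i ≤ θΓ1 i) →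
        Dset S μ 0 (θΓ1 0) ∩ Dset S μ 1 (θΓ2 1) = {θ | ltc θ tθ2r}) ∧
    -- Category III
    ((∀ i, θΓ1 i ≤ θΓ2 i) →
        Dset S μ 0 (θΓ1 0) ∩ Dset S μ 1 (θΓ2 1) = {θ | ltc θ tθ1r}) := by
  subst hθΓ1 hθΓ2
  exact ⟨Dset_inter_Dset_eq hSpd (θGam1_zero_pos hSpd hP hS hmax1) (θGam2_one_pos hSpd hP hS hmax2),
    Dset_inter_Dset_eq_sep_Gmax hSpd (gam_θGam1 hmax1.1) (gam_θGam2 hmax2.1),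
    Dset_inter_Dset_eq_of_catII hSpd hP hS hmax1 hmax2 htθ2r,
    Dset_inter_Dset_eq_of_catIII hSpd hP hS hmax1 hmax2 htθ1r⟩

/-- explicit form of `𝒟^(1) ∩ 𝒟^(2)` in the three categories. -/
theorem stmt_2
    (S R : Matrix (Fin 2) (Fin 2) ℝ) (μ : V)
    (hSpd : S.PosDef) (hSsym : S.IsSymm) (hμ : μ ≠ 0)
    (hP : condP R) (hS : condS μ R)
    (θmax1 θmax2 tθ1r tθ2r : V)
    (hmax1 : gam S μ θmax1 = 0 ∧ ∀ θ, gam S μ θ = 0 → θ 0 ≤ θmax1 0)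
    (hmax2 : gam S μ θmax2 = 0 ∧ ∀ θ, gam S μ θ = 0 → θ 1 ≤ θmax2 1)
    (htθ1r : (θray1 S μ R = θmax1 ∧ tθ1r = θmax1) ∨
      (θray1 S μ R ≠ θmax1 ∧ gam S μ tθ1r = 0 ∧
        tθ1r 0 = θray1 S μ R 0 ∧ tθ1r 1 ≠ θray1 S μ R 1))
    (htθ2r : (θray2 S μ R = θmax2 ∧ tθ2r = θmax2) ∨
      (θray2 S μ R ≠ θmax2 ∧ gam S μ tθ2r = 0 ∧
        tθ2r 1 = θray2 S μ R 1 ∧ tθ2r 0 ≠ θray2 S μ R 0))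
    (θΓ1 θΓ2 : V)
    (hθΓ1 : θΓ1 = if gam2 R θmax1 ≤ 0 then θmax1 else θray1 S μ R)
    (hθΓ2 : θΓ2 = if gam1 R θmax2 ≤ 0 then θmax2 else θray2 S μ R) :
    -- general intersection formula
    (Dset S μ 0 (θΓ1 0) ∩ Dset S μ 1 (θΓ2 1) =
        {θ | ∃ θ' ∈ Gam S μ, ltc θ θ' ∧ θ' 0 < θΓ1 0 ∧ θ' 1 < θΓ2 1}) ∧
    -- Category I
    (θΓ2 0 < θΓ1 0 → θΓ1 1 < θΓ2 1 →
        Dset S μ 0 (θΓ1 0) ∩ Dset S μ 1 (θΓ2 1) =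
          {θ ∈ Gmax S μ | θ 0 < θΓ1 0 ∧ θ 1 < θΓ2 1}) ∧
    -- Category II
    ((∀ i, θΓ2 i ≤ θΓ1 i) →
        Dset S μ 0 (θΓ1 0) ∩ Dset S μ 1 (θΓ2 1) = {θ | ltc θ tθ2r}) ∧
    -- Category III
    ((∀ i, θΓ1 i ≤ θΓ2 i) →
        Dset S μ 0 (θΓ1 0) ∩ Dset S μ 1 (θΓ2 1) = {θ | ltc θ tθ1r}) :=
  stmt_2_general S R μ hSpd hP hS θmax1 θmax2 tθ1r tθ2r hmax1 hmax2 htθ1r htθ2r θΓ1 θΓ2 hθΓ1 hθΓ2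
end
end

section
/- Let Σ be a 2×2 real symmetric positive definite matrix, μ ∈ ℝ² with μ ≠ 0, and v ∈ ℝ² with v₁ ≥ 0, v₂ ≥ 0 and v ≠ 0. Then sup{⟨v, θ⟩ : θ ∈ ℝ², γ(θ) ≥ 0} = sqrt(⟨μ, Σ⁻¹μ⟩ · ⟨v, Σ⁻¹v⟩) − ⟨μ, Σ⁻¹v⟩, and the supremum is attained at the point θ^(v,Γ) = Σ⁻¹(σ v − μ), where σ = sqrt(⟨Σ⁻¹μ, μ⟩ / ⟨Σ⁻¹v, v⟩). -/
/-!
Substitute `y = Σθ + μ`. Completing the square gives `γ(θ) = (⟨μ, Σ⁻¹μ⟩ - ⟨y, Σ⁻¹y⟩) / 2` and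
`⟨v, θ⟩ = ⟨v, Σ⁻¹y⟩ - ⟨μ, Σ⁻¹v⟩`, so one maximises the `Σ⁻¹`-inner product with `v` over the
`Σ⁻¹`-ball of radius `√⟨μ, Σ⁻¹μ⟩`. Cauchy–Schwarz bounds it by `√(⟨μ, Σ⁻¹μ⟩⟨v, Σ⁻¹v⟩)`, with
equality at `y = σ v`, i.e. at `θ = Σ⁻¹(σ v - μ)`.
-/

open Matrix Set

noncomputable section

namespace Matrix

variable {n : Type*} [Fintype n]

theorem IsSymm.dotProduct_mulVec_comm {A : Matrix n n ℝ} (hA : A.IsSymm) (x y : n → ℝ) :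
    x ⬝ᵥ A *ᵥ y = y ⬝ᵥ A *ᵥ x := by
  rw [dotProduct_mulVec, ← mulVec_transpose, hA.eq, dotProduct_comm]

theorem PosSemidef.dotProduct_mulVec_le_sqrt {A : Matrix n n ℝ} (hA : A.PosSemidef)
    (x y : n → ℝ) : x ⬝ᵥ A *ᵥ y ≤ √((x ⬝ᵥ A *ᵥ x) * (y ⬝ᵥ A *ᵥ y)) := by
  classical
  have hsymm : A.IsSymm := isHermitian_iff_isSymm.mp hA.isHermitian
  have hcs := (toBilin' A).apply_mul_apply_le_of_forall_zero_le
    (by simpa [toBilin'_apply'] using hA.dotProduct_mulVec_nonneg) x y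
  refine Real.le_sqrt_of_sq_le ?_
  simpa only [toBilin'_apply', hsymm.dotProduct_mulVec_comm y x, ← sq] using hcs

variable [DecidableEq n] {S : Matrix n n ℝ}

theorem inv_mulVec_mulVec (hS : IsUnit S.det) (x : n → ℝ) : S⁻¹ *ᵥ (S *ᵥ x) = x := by
  rw [mulVec_mulVec, nonsing_inv_mul S hS, one_mulVec]

theorem mulVec_inv_mulVec (hS : IsUnit S.det) (x : n → ℝ) : S *ᵥ (S⁻¹ *ᵥ x) = x := by
  rw [mulVec_mulVec, mul_nonsing_inv S hS, one_mulVec]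

theorem IsSymm.dotProduct_eq_dotProduct_inv_mulVec_sub (hS : S.IsSymm) (hdet : IsUnit S.det)
    (μ v θ : n → ℝ) : v ⬝ᵥ θ = v ⬝ᵥ S⁻¹ *ᵥ (S *ᵥ θ + μ) - μ ⬝ᵥ S⁻¹ *ᵥ v := by
  rw [mulVec_add, inv_mulVec_mulVec hdet, dotProduct_add, hS.inv.dotProduct_mulVec_comm v μ]
  ring

theorem IsSymm.add_dotProduct_inv_mulVec_add (hS : S.IsSymm) (hdet : IsUnit S.det)
    (μ θ : n → ℝ) : (S *ᵥ θ + μ) ⬝ᵥ S⁻¹ *ᵥ (S *ᵥ θ + μ) =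
      θ ⬝ᵥ S *ᵥ θ + 2 * (μ ⬝ᵥ θ) + μ ⬝ᵥ S⁻¹ *ᵥ μ := by
  rw [mulVec_add, inv_mulVec_mulVec hdet, add_dotProduct, dotProduct_add, dotProduct_add,
    dotProduct_comm (S *ᵥ θ) θ, dotProduct_comm (S *ᵥ θ), hS.dotProduct_mulVec_comm (S⁻¹ *ᵥ μ) θ,
    mulVec_inv_mulVec hdet, dotProduct_comm θ μ]
  ring

end Matrix

theorem Real.sqrt_div_mul_self {w : ℝ} (hw : 0 ≤ w) (m : ℝ) : √(m / w) * w = √(m * w) := by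
  rw [← Real.sqrt_sq hw, ← Real.sqrt_mul' _ (sq_nonneg _), Real.sqrt_sq hw]
  rcases hw.eq_or_lt with rfl | hw
  · simp
  · congr 1; field_simp

theorem Real.sqrt_div_sq_mul_le {m w : ℝ} (hm : 0 ≤ m) (hw : 0 ≤ w) : √(m / w) ^ 2 * w ≤ m := by
  rw [Real.sq_sqrt (div_nonneg hm hw)]
  rcases hw.eq_or_lt with rfl | hw
  · simpa using hm
  · rw [div_mul_cancel₀ _ hw.ne']

theorem gam_eq_half_sub {S : Matrix (Fin 2) (Fin 2) ℝ} (hS : S.IsSymm) (hdet : IsUnit S.det)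
    (μ θ : V) : gam S μ θ = (μ ⬝ᵥ S⁻¹ *ᵥ μ - (S *ᵥ θ + μ) ⬝ᵥ S⁻¹ *ᵥ (S *ᵥ θ + μ)) / 2 := by
  rw [gam, hS.add_dotProduct_inv_mulVec_add hdet]
  ring

theorem stmt_5_general
    (S : Matrix (Fin 2) (Fin 2) ℝ) (μ v : V)
    (hSpd : S.PosDef) (hSsym : S.IsSymm)
    (σ : ℝ) (hσ : σ = Real.sqrt ((S⁻¹.mulVec μ ⬝ᵥ μ) / (S⁻¹.mulVec v ⬝ᵥ v)))
    (θvΓ : V) (hθvΓ : θvΓ = S⁻¹.mulVec (σ • v - μ)) :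
    sSup ((fun θ => v ⬝ᵥ θ) '' {θ | 0 ≤ gam S μ θ}) =
      Real.sqrt ((μ ⬝ᵥ S⁻¹.mulVec μ) * (v ⬝ᵥ S⁻¹.mulVec v)) - μ ⬝ᵥ S⁻¹.mulVec v ∧
    v ⬝ᵥ θvΓ =
      Real.sqrt ((μ ⬝ᵥ S⁻¹.mulVec μ) * (v ⬝ᵥ S⁻¹.mulVec v)) - μ ⬝ᵥ S⁻¹.mulVec v ∧
    IsGreatest ((fun θ => v ⬝ᵥ θ) '' {θ | 0 ≤ gam S μ θ}) (v ⬝ᵥ θvΓ) := by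
  have hdet : IsUnit S.det := (isUnit_iff_isUnit_det S).mp hSpd.isUnit
  have hA : S⁻¹.PosSemidef := hSpd.inv.posSemidef
  have hm : 0 ≤ μ ⬝ᵥ S⁻¹ *ᵥ μ := by simpa using hA.dotProduct_mulVec_nonneg μ
  have hw : 0 ≤ v ⬝ᵥ S⁻¹ *ᵥ v := by simpa using hA.dotProduct_mulVec_nonneg v
  rw [dotProduct_comm (S⁻¹ *ᵥ μ), dotProduct_comm (S⁻¹ *ᵥ v)] at hσ
  have hshift : S *ᵥ θvΓ + μ = σ • v := by
    rw [hθvΓ, mulVec_inv_mulVec hdet, sub_add_cancel]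
  have hval : v ⬝ᵥ θvΓ = √((μ ⬝ᵥ S⁻¹ *ᵥ μ) * (v ⬝ᵥ S⁻¹ *ᵥ v)) - μ ⬝ᵥ S⁻¹ *ᵥ v := by
    rw [hSsym.dotProduct_eq_dotProduct_inv_mulVec_sub hdet μ, hshift, mulVec_smul,
      dotProduct_smul, smul_eq_mul, hσ, Real.sqrt_div_mul_self hw]
  have hgreatest : IsGreatest ((fun θ => v ⬝ᵥ θ) '' {θ | 0 ≤ gam S μ θ}) (v ⬝ᵥ θvΓ) := by
    refine ⟨⟨θvΓ, ?_, rfl⟩, ?_⟩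
    · rw [mem_ofPred_eq, gam_eq_half_sub hSsym hdet, hshift, mulVec_smul, dotProduct_smul,
        smul_dotProduct, smul_eq_mul, smul_eq_mul, ← mul_assoc, ← sq, hσ]
      linarith [Real.sqrt_div_sq_mul_le hm hw]
    · rintro _ ⟨θ, hθ, rfl⟩
      have hball : (S *ᵥ θ + μ) ⬝ᵥ S⁻¹ *ᵥ (S *ᵥ θ + μ) ≤ μ ⬝ᵥ S⁻¹ *ᵥ μ := by
        rw [mem_ofPred_eq, gam_eq_half_sub hSsym hdet] at hθ
        linarith
      dsimp only
      rw [hval, hSsym.dotProduct_eq_dotProduct_inv_mulVec_sub hdet μ v θ]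
      gcongr
      calc _ ≤ √((v ⬝ᵥ S⁻¹ *ᵥ v) * ((S *ᵥ θ + μ) ⬝ᵥ S⁻¹ *ᵥ (S *ᵥ θ + μ))) :=
            hA.dotProduct_mulVec_le_sqrt v _
        _ ≤ √((μ ⬝ᵥ S⁻¹ *ᵥ μ) * (v ⬝ᵥ S⁻¹ *ᵥ v)) := by
            rw [mul_comm]
            gcongr
  exact ⟨hgreatest.csSup_eq.trans hval, hval, hgreatest⟩

/-- `sup{⟨v,θ⟩ : γ(θ) ≥ 0} = √(⟨μ,Σ⁻¹μ⟩⟨v,Σ⁻¹v⟩) − ⟨μ,Σ⁻¹v⟩`,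
attained at `θ^(v,Γ) = Σ⁻¹(σv − μ)` (Lemma 4.1). -/
theorem stmt_5
    (S : Matrix (Fin 2) (Fin 2) ℝ) (μ v : V)
    (hSpd : S.PosDef) (hSsym : S.IsSymm) (hμ : μ ≠ 0)
    (hv1 : 0 ≤ v 0) (hv2 : 0 ≤ v 1) (hv : v ≠ 0)
    (σ : ℝ) (hσ : σ = Real.sqrt ((S⁻¹.mulVec μ ⬝ᵥ μ) / (S⁻¹.mulVec v ⬝ᵥ v)))
    (θvΓ : V) (hθvΓ : θvΓ = S⁻¹.mulVec (σ • v - μ)) :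
    sSup ((fun θ => v ⬝ᵥ θ) '' {θ | 0 ≤ gam S μ θ}) =
      Real.sqrt ((μ ⬝ᵥ S⁻¹.mulVec μ) * (v ⬝ᵥ S⁻¹.mulVec v)) - μ ⬝ᵥ S⁻¹.mulVec v ∧
    v ⬝ᵥ θvΓ =
      Real.sqrt ((μ ⬝ᵥ S⁻¹.mulVec μ) * (v ⬝ᵥ S⁻¹.mulVec v)) - μ ⬝ᵥ S⁻¹.mulVec v ∧
    IsGreatest ((fun θ => v ⬝ᵥ θ) '' {θ | 0 ≤ gam S μ θ}) (v ⬝ᵥ θvΓ) :=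
  stmt_5_general S μ v hSpd hSsym σ hσ θvΓ hθvΓ
end
end

section
/- Assume conditions (P) and (S), and suppose that θ̃^(1,r) = θ̃^(2,r); write α = (α₁, α₂) for this common point. Then the factorization γ(θ) = (Σ₁₁ / (2 r₁₁)) γ₁(θ) (α₁ − θ₁) + (Σ₂₂ / (2 r₂₂)) γ₂(θ) (α₂ − θ₂) holds for all θ ∈ ℝ². -/
open Matrix Set

noncomputable section

/-!
Comparing coefficients, the factorization amounts to the skew-symmetry condition
`2 Σ₁₂ r₁₁ r₂₂ = Σ₁₁ r₂₁ r₂₂ + Σ₂₂ r₁₁ r₁₂` and two linear relations for `α`. Besides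
`α₁ = θ^(1,r)₁` and `α₂ = θ^(2,r)₂`, the input is that `∂γ/∂θ₂` vanishes at the midpoint of
`θ^(1,r)` and `α`: both lie on `∂Γ` and on a line `θ₁ = const`, so this is Vieta's formula, or the
tangency of that line at `θ^(1,max)` when the two points coincide there (symmetrically for `θ^(2,r)`).
Eliminating `α` with `γ(θ^(1,r)) = 0` leaves `t · (skew-symmetry defect) = 0`, where
`θ^(2,r) = t p⁽²⁾` and `t > 0` by (S).
-/

section

variable {S : Matrix (Fin 2) (Fin 2) ℝ} {μ : V}

lemma posDef_dotProduct_mulVec_pos (hpd : S.PosDef) {v : V} (hv : v ≠ 0) :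
    0 < v ⬝ᵥ S *ᵥ v := by
  simpa using hpd.dotProduct_mulVec_pos hv

lemma gam_add_smul (hS : S.IsSymm) (θ v : V) (s : ℝ) :
    gam S μ (θ + s • v) =
      gam S μ θ - s * ((S *ᵥ θ + μ) ⬝ᵥ v) - s ^ 2 / 2 * (v ⬝ᵥ S *ᵥ v) := by
  simp only [gam, dotProduct, mulVec, Fin.sum_univ_two, Pi.add_apply, Pi.smul_apply, smul_eq_mul]
  linear_combination (s / 2 * (θ 0 * v 1 - θ 1 * v 0)) * hS.apply 0 1

lemma gam_add_smul_single (hS : S.IsSymm) (θ : V) (j : Fin 2) (s : ℝ) :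
    gam S μ (θ + s • Pi.single j 1) = gam S μ θ - s * (S *ᵥ θ + μ) j - s ^ 2 / 2 * S j j := by
  simp only [gam_add_smul hS, dotProduct_single, single_dotProduct, mulVec_single_one, col_apply,
    one_mul, mul_one]

lemma mulVec_add_apply_eq_zero_of_isMax (hS : S.IsSymm) (hpd : S.PosDef) {i j : Fin 2}
    (hij : i ≠ j) {θm : V} (hm : gam S μ θm = 0) (hmax : ∀ θ, gam S μ θ = 0 → θ i ≤ θm i) :
    (S *ᵥ θm + μ) j = 0 := by
  -- Otherwise `γ` increases from `θm` along some `v` with `v i = 1`, and the line `θm + s • v`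
  -- meets `∂Γ` again at `s = 2 / (v ⬝ᵥ S *ᵥ v) > 0`, beyond the maximum.
  set w := S *ᵥ θm + μ
  by_contra hw
  set v : V := Pi.single i 1 - ((w i + 1) / w j) • Pi.single j 1
  have hvi : v i = 1 := by simp [v, hij]
  have hwv : w ⬝ᵥ v = -1 := by
    simp only [v, dotProduct_sub, dotProduct_smul, dotProduct_single, smul_eq_mul]
    field_simp
    ring
  have hQ : 0 < v ⬝ᵥ S *ᵥ v := posDef_dotProduct_mulVec_pos hpd fun h => by simp [h] at hvi
  have hon : gam S μ (θm + (2 / (v ⬝ᵥ S *ᵥ v)) • v) = 0 := by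
    rw [gam_add_smul hS, hm, hwv]
    field_simp
    ring
  have := hmax _ hon
  simp only [Pi.add_apply, Pi.smul_apply, hvi, smul_eq_mul, mul_one] at this
  linarith [div_pos two_pos hQ]

/-- `θt` is the point `θ̃^(i,r)` of the paper when `θm = θ^(i,max)` and `θr = θ^(i,r)`;
`j` is the other coordinate. -/
def IsChordPartner (S : Matrix (Fin 2) (Fin 2) ℝ) (μ : V) (i j : Fin 2) (θm θr θt : V) : Prop :=
  (θr = θm ∧ θt = θm) ∨ (θr ≠ θm ∧ gam S μ θt = 0 ∧ θt i = θr i ∧ θt j ≠ θr j)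

namespace IsChordPartner

variable {i j : Fin 2} {θm θr θt : V}

lemma apply_eq (h : IsChordPartner S μ i j θm θr θt) : θt i = θr i := by
  rcases h with ⟨rfl, rfl⟩ | ⟨-, -, h, -⟩
  exacts [rfl, h]

/-- For `θr ≠ θt` this is Vieta's formula on the chord `{θ | θ i = θr i}`; for `θr = θt = θm` it is
tangency at the maximum. -/
lemma mulVec_add_apply_eq_zero (hS : S.IsSymm) (hpd : S.PosDef) (hij : i ≠ j)
    (hm : gam S μ θm = 0) (hmax : ∀ θ, gam S μ θ = 0 → θ i ≤ θm i) (hr : gam S μ θr = 0)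
    (h : IsChordPartner S μ i j θm θr θt) :
    (S *ᵥ (θr + θt) + 2 • μ) j = 0 := by
  rcases h with ⟨rfl, rfl⟩ | ⟨-, ht, hi, hj⟩
  · have := mulVec_add_apply_eq_zero_of_isMax hS hpd hij hm hmax
    simp only [Pi.add_apply, Pi.smul_apply, mulVec_add] at this ⊢
    linear_combination 2 * this
  set s := θt j - θr j
  have hθt : θt = θr + s • Pi.single j 1 := by
    funext k
    by_cases hk : k = j
    · subst hk
      simp [s]
    · obtain rfl : k = i := by omega
      simp [hi, hk]
  rw [hθt, gam_add_smul_single hS, hr] at ht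
  have hs : s ≠ 0 := sub_ne_zero.mpr hj
  have key : 2 * (S *ᵥ θr + μ) j + s * S j j = 0 := by
    refine mul_left_cancel₀ hs ?_
    linear_combination -2 * ht
  rw [hθt]
  simp only [Pi.add_apply, Pi.smul_apply, mulVec_add, mulVec_smul, mulVec_single_one, col_apply,
    smul_eq_mul] at key ⊢
  linear_combination key

end IsChordPartner

-- `θray1 S μ R = rayCoeff S μ (pvec1 R) • pvec1 R` and likewise for `θray2`, by definition.
def rayCoeff (S : Matrix (Fin 2) (Fin 2) ℝ) (μ p : V) : ℝ :=
  -2 * (μ ⬝ᵥ p) / (p ⬝ᵥ S *ᵥ p)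

variable {p : V}

lemma rayCoeff_mul (hp : p ⬝ᵥ S *ᵥ p ≠ 0) : rayCoeff S μ p * (p ⬝ᵥ S *ᵥ p) = -2 * (μ ⬝ᵥ p) :=
  div_mul_cancel₀ _ hp

lemma rayCoeff_pos (hp : 0 < p ⬝ᵥ S *ᵥ p) (hμp : μ ⬝ᵥ p < 0) : 0 < rayCoeff S μ p :=
  div_pos (by linarith) hp

lemma gam_rayCoeff_smul (hp : p ⬝ᵥ S *ᵥ p ≠ 0) : gam S μ (rayCoeff S μ p • p) = 0 := by
  simp only [gam, mulVec_smul, dotProduct_smul, smul_dotProduct, smul_eq_mul]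
  linear_combination (-rayCoeff S μ p / 2) * rayCoeff_mul (μ := μ) hp

end

section

variable {S R : Matrix (Fin 2) (Fin 2) ℝ} {μ α : V} {t₁ t₂ : ℝ}

lemma skew_symmetry_of_chords (hS : S.IsSymm) (ht₂ : t₂ ≠ 0)
    (hray : t₁ * (pvec1 R ⬝ᵥ S *ᵥ pvec1 R) = -2 * (μ ⬝ᵥ pvec1 R))
    (hα₀ : α 0 = (t₁ • pvec1 R) 0) (hα₁ : α 1 = (t₂ • pvec2 R) 1)
    (h₁ : (S *ᵥ (t₁ • pvec1 R + α) + 2 • μ) 1 = 0)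
    (h₂ : (S *ᵥ (t₂ • pvec2 R + α) + 2 • μ) 0 = 0) :
    2 * S 0 1 * R 0 0 * R 1 1 = S 0 0 * R 1 0 * R 1 1 + S 1 1 * R 0 0 * R 0 1 := by
  simp only [pvec1, pvec2, mulVec, dotProduct, Fin.sum_univ_two, Pi.add_apply, Pi.smul_apply,
    smul_eq_mul, cons_val_zero, cons_val_one, hS.apply 0 1] at hray hα₀ hα₁ h₁ h₂
  rw [hα₀, hα₁] at h₁ h₂
  have hdefect : t₂ * (2 * S 0 1 * R 0 0 * R 1 1 - S 0 0 * R 1 0 * R 1 1 - S 1 1 * R 0 0 * R 0 1) = 0 := by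
    linear_combination R 1 1 * h₂ - R 0 1 * h₁ - hray
  linear_combination (mul_eq_zero.mp hdefect).resolve_left ht₂

lemma gam_eq_factorization_of_skew (hS : S.IsSymm) (hr₀ : R 0 0 ≠ 0) (hr₁ : R 1 1 ≠ 0)
    (hK : 2 * S 0 1 * R 0 0 * R 1 1 = S 0 0 * R 1 0 * R 1 1 + S 1 1 * R 0 0 * R 0 1)
    (hα₀ : α 0 = (t₁ • pvec1 R) 0) (hα₁ : α 1 = (t₂ • pvec2 R) 1)
    (h₁ : (S *ᵥ (t₁ • pvec1 R + α) + 2 • μ) 1 = 0)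
    (h₂ : (S *ᵥ (t₂ • pvec2 R + α) + 2 • μ) 0 = 0) (θ : V) :
    gam S μ θ = S 0 0 / (2 * R 0 0) * gam1 R θ * (α 0 - θ 0) +
      S 1 1 / (2 * R 1 1) * gam2 R θ * (α 1 - θ 1) := by
  simp only [pvec1, pvec2, mulVec, dotProduct, Fin.sum_univ_two, Pi.add_apply, Pi.smul_apply,
    smul_eq_mul, cons_val_zero, cons_val_one, hS.apply 0 1] at hα₀ hα₁ h₁ h₂
  have hlin₀ : S 0 0 * R 1 1 * α 0 + S 1 1 * R 0 1 * α 1 + 2 * μ 0 * R 1 1 = 0 := by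
    linear_combination R 1 1 * h₂ - t₂ * hK + (S 1 1 * R 0 1 - S 0 1 * R 1 1) * hα₁
  have hlin₁ : S 0 0 * R 1 0 * α 0 + S 1 1 * R 0 0 * α 1 + 2 * μ 1 * R 0 0 = 0 := by
    linear_combination R 0 0 * h₁ - t₁ * hK + (S 0 0 * R 1 0 - S 0 1 * R 0 0) * hα₀
  simp only [gam, gam1, gam2, dotProduct, mulVec, Fin.sum_univ_two, hS.apply 0 1]
  field_simp
  linear_combination -(θ 0 * θ 1) * hK - R 0 0 * θ 0 * hlin₀ - R 1 1 * θ 1 * hlin₁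

end

theorem stmt_12_general
    (S R : Matrix (Fin 2) (Fin 2) ℝ) (μ : V)
    (hSpd : S.PosDef) (hSsym : S.IsSymm)
    (hP : condP R) (hS : condS μ R)
    (θmax1 θmax2 tθ1r tθ2r : V)
    (hmax1 : gam S μ θmax1 = 0 ∧ ∀ θ, gam S μ θ = 0 → θ 0 ≤ θmax1 0)
    (hmax2 : gam S μ θmax2 = 0 ∧ ∀ θ, gam S μ θ = 0 → θ 1 ≤ θmax2 1)
    (htθ1r : (θray1 S μ R = θmax1 ∧ tθ1r = θmax1) ∨
      (θray1 S μ R ≠ θmax1 ∧ gam S μ tθ1r = 0 ∧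
        tθ1r 0 = θray1 S μ R 0 ∧ tθ1r 1 ≠ θray1 S μ R 1))
    (htθ2r : (θray2 S μ R = θmax2 ∧ tθ2r = θmax2) ∨
      (θray2 S μ R ≠ θmax2 ∧ gam S μ tθ2r = 0 ∧
        tθ2r 1 = θray2 S μ R 1 ∧ tθ2r 0 ≠ θray2 S μ R 0))
    (α : V) (hα1 : α = tθ1r) (hα2 : α = tθ2r) :
    ∀ θ : V, gam S μ θ =
      S 0 0 / (2 * R 0 0) * gam1 R θ * (α 0 - θ 0) +
      S 1 1 / (2 * R 1 1) * gam2 R θ * (α 1 - θ 1) := by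
  obtain ⟨hr₀, hr₁, -⟩ := hP
  subst hα1 hα2
  have hQ₁ : 0 < pvec1 R ⬝ᵥ S *ᵥ pvec1 R :=
    posDef_dotProduct_mulVec_pos hSpd fun h => by simpa [pvec1, hr₁.ne'] using congrFun h 0
  have hQ₂ : 0 < pvec2 R ⬝ᵥ S *ᵥ pvec2 R :=
    posDef_dotProduct_mulVec_pos hSpd fun h => by simpa [pvec2, hr₀.ne'] using congrFun h 1
  have ht₂ : 0 < rayCoeff S μ (pvec2 R) :=
    rayCoeff_pos hQ₂ (by
      simp only [pvec2, dotProduct, Fin.sum_univ_two, cons_val_zero, cons_val_one]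
      linarith [hS.2])
  have h₁ := IsChordPartner.mulVec_add_apply_eq_zero hSsym hSpd zero_ne_one hmax1.1 hmax1.2
    (gam_rayCoeff_smul hQ₁.ne') htθ1r
  have h₂ := IsChordPartner.mulVec_add_apply_eq_zero hSsym hSpd one_ne_zero hmax2.1 hmax2.2
    (gam_rayCoeff_smul hQ₂.ne') htθ2r
  have hK := skew_symmetry_of_chords hSsym ht₂.ne' (rayCoeff_mul hQ₁.ne')
    (IsChordPartner.apply_eq htθ1r) (IsChordPartner.apply_eq htθ2r) h₁ h₂
  exact gam_eq_factorization_of_skew hSsym hr₀.ne' hr₁.ne' hK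
    (IsChordPartner.apply_eq htθ1r) (IsChordPartner.apply_eq htθ2r) h₁ h₂

/-- if `θ̃^(1,r) = θ̃^(2,r) = α`, then `γ` factorizes as
`γ(θ) = (Σ₁₁/(2r₁₁)) γ₁(θ)(α₁ − θ₁) + (Σ₂₂/(2r₂₂)) γ₂(θ)(α₂ − θ₂)` (eq. (5.14)). -/
theorem stmt_12
    (S R : Matrix (Fin 2) (Fin 2) ℝ) (μ : V)
    (hSpd : S.PosDef) (hSsym : S.IsSymm) (hμ : μ ≠ 0)
    (hP : condP R) (hS : condS μ R)
    (θmax1 θmax2 tθ1r tθ2r : V)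
    (hmax1 : gam S μ θmax1 = 0 ∧ ∀ θ, gam S μ θ = 0 → θ 0 ≤ θmax1 0)
    (hmax2 : gam S μ θmax2 = 0 ∧ ∀ θ, gam S μ θ = 0 → θ 1 ≤ θmax2 1)
    (htθ1r : (θray1 S μ R = θmax1 ∧ tθ1r = θmax1) ∨
      (θray1 S μ R ≠ θmax1 ∧ gam S μ tθ1r = 0 ∧
        tθ1r 0 = θray1 S μ R 0 ∧ tθ1r 1 ≠ θray1 S μ R 1))
    (htθ2r : (θray2 S μ R = θmax2 ∧ tθ2r = θmax2) ∨
      (θray2 S μ R ≠ θmax2 ∧ gam S μ tθ2r = 0 ∧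
        tθ2r 1 = θray2 S μ R 1 ∧ tθ2r 0 ≠ θray2 S μ R 0))
    (α : V) (hα1 : α = tθ1r) (hα2 : α = tθ2r) :
    ∀ θ : V, gam S μ θ =
      S 0 0 / (2 * R 0 0) * gam1 R θ * (α 0 - θ 0) +
      S 1 1 / (2 * R 1 1) * gam2 R θ * (α 1 - θ 1) :=
  stmt_12_general S R μ hSpd hSsym hP hS θmax1 θmax2 tθ1r tθ2r hmax1 hmax2 htθ1r htθ2r α hα1 hα2
end
end
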